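/- arXiv:2203.16447 — 8 statements merged into one kernel-verified Lean document; each statement's English description precedes it below -/
import Mathlib

section
/- Let (X,d) be a proper geodesic metric space satisfying the four-point condition with constant δ > 0. Let k be a positive integer, let γ: [0, 4kδ] → X be a geodesic segment, and set a := γ(0) and b := γ(4kδ). Then there exist constants α = α(δ) > 0 and β = β(δ) > 0, depending only on δ, such that the open sets U_i := {x ∈ X : (x|b)_a > 4iδ} for i = 1, …, k−1, together with the track points x_i := γ(4iδ), form a Φ-chain for the linear function Φ(t) = α·t + β. -/
/-- The Gromov product `(x|y)_z` of `x` and `y` with respect to the basepoint `z`. -/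
noncomputable def gromovProd {X : Type*} [MetricSpace X] (z x y : X) : ℝ :=
  (dist z x + dist z y - dist x y) / 2

/-- The four-point condition with constant `δ`:
`(x|y)_z ≥ min {(x|w)_z, (w|y)_z} − δ` for all `x, y, z, w`. -/
def FourPointCondition (X : Type*) [MetricSpace X] (δ : ℝ) : Prop :=
  ∀ x y z w : X, gromovProd z x y ≥ min (gromovProd z x w) (gromovProd z w y) - δ

/-- `γ` is a geodesic segment from `x` to `y`, parametrized by arclength on `[0, dist x y]`. -/
def IsGeodesicSegment {X : Type*} [MetricSpace X] (γ : ℝ → X) (x y : X) : Prop :=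
  γ 0 = x ∧ γ (dist x y) = y ∧
    ∀ s ∈ Set.Icc (0 : ℝ) (dist x y), ∀ t ∈ Set.Icc (0 : ℝ) (dist x y),
      dist (γ s) (γ t) = |s - t|

/-- A metric space is geodesic if any two points are joined by a geodesic segment. -/
def GeodesicSpace (X : Type*) [MetricSpace X] : Prop :=
  ∀ x y : X, ∃ γ : ℝ → X, IsGeodesicSegment γ x y

/-- The sets `U i` with track points `p i`, for indices `lo ≤ i ≤ hi`, form a `Φ`-chain:
the `U i` are open and nested, `p i ∈ ∂U i`, consecutive track points have distance
between `Φ 0` and `3 * Φ 0`, and every `x ∈ ∂U i` satisfies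
`d(x, ∂U (i±1)) ≥ Φ (d(x, p i))`. -/
def IsPhiChainOn {X : Type*} [MetricSpace X] (Φ : ℝ → ℝ) (U : ℕ → Set X) (p : ℕ → X)
    (lo hi : ℕ) : Prop :=
  (∀ i, lo ≤ i → i ≤ hi → IsOpen (U i)) ∧
  (∀ i, lo ≤ i → i < hi → U (i + 1) ⊆ U i) ∧
  (∀ i, lo ≤ i → i ≤ hi → p i ∈ frontier (U i)) ∧
  (∀ i, lo ≤ i → i < hi →
    Φ 0 ≤ dist (p i) (p (i + 1)) ∧ dist (p i) (p (i + 1)) ≤ 3 * Φ 0) ∧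
  (∀ i, lo ≤ i → i < hi → ∀ x ∈ frontier (U i),
    Φ (dist x (p i)) ≤ Metric.infDist x (frontier (U (i + 1)))) ∧
  (∀ i, lo < i → i ≤ hi → ∀ x ∈ frontier (U i),
    Φ (dist x (p i)) ≤ Metric.infDist x (frontier (U (i - 1))))

universe u

lemma gromovProd_comm' {X : Type*} [MetricSpace X] (z x y : X) :
    gromovProd z x y = gromovProd z y x := by
  unfold gromovProd; rw [dist_comm x y]; ring

lemma gromovProd_le_dist' {X : Type*} [MetricSpace X] (z x y : X) :
    gromovProd z x y ≤ dist z x := by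
  unfold gromovProd
  have := dist_triangle z x y
  linarith

lemma dist_eq_gromov {X : Type*} [MetricSpace X] (z x y : X) :
    dist x y = dist z x + dist z y - 2 * gromovProd z x y := by
  unfold gromovProd; ring

/-- The key quantitative estimate. -/
lemma key_estimate {X : Type*} [MetricSpace X] {δ : ℝ} (hδ : 0 < δ)
    (H : FourPointCondition X δ) (a b p x y : X) (c c' : ℝ)
    (hp1 : dist a p = c) (hp2 : gromovProd a p b = c)
    (hx : gromovProd a x b = c) (hy : gromovProd a y b = c')
    (hcc : c' = c + 4 * δ ∨ c' = c - 4 * δ) :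
    dist x p / 6 + 2 * δ ≤ dist x y := by
  -- B : (x|p)_a ≥ c - δ
  have hB : gromovProd a x p ≥ c - δ := by
    have h := H x p a b
    rw [gromovProd_comm' a b p, hp2, hx, min_self] at h
    exact h
  -- A : (x|y)_a ≤ c + δ
  have hA : gromovProd a x y ≤ c + δ := by
    rcases hcc with h' | h'
    · have h := H x b a y
      rw [hx, hy, h'] at h
      rcases le_total (gromovProd a x y) (c + 4 * δ) with hle | hle
      · rw [min_eq_left hle] at h; linarith
      · rw [min_eq_right hle] at h; linarith
    · have h := H y b a x
      rw [hy, hx, h', gromovProd_comm' a y x] at h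
      rcases le_total (gromovProd a x y) c with hle | hle
      · rw [min_eq_left hle] at h; linarith
      · rw [min_eq_right hle] at h; linarith
  have e1 := dist_eq_gromov a x y
  have e2 := dist_eq_gromov a x p
  have e3 : c' ≤ dist a y := hy ▸ gromovProd_le_dist' a y b
  -- Lipschitz bound: |c - c'| ≤ dist x y, i.e. 4δ ≤ dist x y
  have hx' : dist a x + dist a b - dist x b = 2 * c := by
    unfold gromovProd at hx; linarith
  have hy' : dist a y + dist a b - dist y b = 2 * c' := by
    unfold gromovProd at hy; linarith
  have t1 := dist_triangle a y x
  have t2 := dist_triangle y x b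
  have t3 := dist_triangle a x y
  have t4 := dist_triangle x y b
  have hcomm : dist y x = dist x y := dist_comm y x
  have hlip : 4 * δ ≤ dist x y := by
    rcases hcc with h' | h' <;> linarith
  rcases le_total (dist x p) (12 * δ) with hle | hle
  · linarith
  · -- dist x y ≥ dist a x + dist a y - 2(c+δ) ≥ dist a x - c - 6δ ≥ dist x p - 8δ
    rcases hcc with h' | h' <;> linarith

/-- **Φ-chains on hyperbolic spaces.** On a proper geodesic metric space satisfying the
four-point condition with constant `δ > 0`, along any geodesic `γ : [0, 4kδ] → X` with
`a = γ 0` and `b = γ (4kδ)`, the sublevel sets `U_i = {x | (x|b)_a > 4iδ}` with track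
points `x_i = γ (4iδ)`, `i = 1, …, k-1`, form a `Φ`-chain for a linear function
`Φ(t) = α·t + β` whose constants `α, β > 0` depend only on `δ`. -/
theorem phi_chains_on_hyperbolic_spaces (δ : ℝ) (hδ : 0 < δ) :
    ∃ α β : ℝ, 0 < α ∧ 0 < β ∧
      ∀ (X : Type u) [inst : MetricSpace X], ProperSpace X → GeodesicSpace X →
        FourPointCondition X δ →
        ∀ k : ℕ, 0 < k → ∀ γ : ℝ → X,
          (∀ s ∈ Set.Icc (0 : ℝ) (4 * (k : ℝ) * δ), ∀ t ∈ Set.Icc (0 : ℝ) (4 * (k : ℝ) * δ),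
            dist (γ s) (γ t) = |s - t|) →
          IsPhiChainOn (fun t => α * t + β)
            (fun i => {x : X | 4 * (i : ℝ) * δ < gromovProd (γ 0) x (γ (4 * (k : ℝ) * δ))})
            (fun i => γ (4 * (i : ℝ) * δ)) 1 (k - 1) := by
  refine ⟨1/6, 2*δ, by norm_num, by linarith, ?_⟩
  intro X _ _hprop _hgeo H4 k hk γ hγ
  set a := γ 0 with ha
  set b := γ (4 * (k : ℝ) * δ) with hb
  set L := 4 * (k : ℝ) * δ with hL
  have hL0 : 0 ≤ L := by
    have : (0:ℝ) ≤ (k:ℝ) := Nat.cast_nonneg k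
    positivity
  have hg : Continuous fun x : X => gromovProd a x b := by
    unfold gromovProd; fun_prop
  -- value of the Gromov product along the geodesic
  have hval : ∀ s ∈ Set.Icc (0:ℝ) L, gromovProd a (γ s) b = s := by
    intro s hs
    have h1 : dist a (γ s) = s := by
      rw [ha, hγ 0 ⟨le_refl 0, hL0⟩ s hs, abs_sub_comm, sub_zero, abs_of_nonneg hs.1]
    have h2 : dist a b = L := by
      rw [ha, hb, hγ 0 ⟨le_refl 0, hL0⟩ L ⟨hL0, le_refl L⟩, abs_sub_comm, sub_zero,
        abs_of_nonneg hL0]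
    have h3 : dist (γ s) b = L - s := by
      rw [hb, hγ s hs L ⟨hL0, le_refl L⟩, abs_of_nonpos (by linarith [hs.2]), neg_sub]
    unfold gromovProd
    rw [h1, h2, h3]; ring
  have hdist : ∀ s ∈ Set.Icc (0:ℝ) L, ∀ t ∈ Set.Icc (0:ℝ) L,
      dist (γ s) (γ t) = |s - t| := hγ
  -- membership of 4iδ in [0, L]
  have hmem : ∀ i : ℕ, i ≤ k → (4 * (i:ℝ) * δ) ∈ Set.Icc (0:ℝ) L := by
    intro i hi
    have h1 : (0:ℝ) ≤ (i:ℝ) := Nat.cast_nonneg i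
    have h2 : (i:ℝ) ≤ (k:ℝ) := Nat.cast_le.mpr hi
    constructor
    · positivity
    · rw [hL]; nlinarith
  -- frontier points have product value exactly 4iδ
  have hfront : ∀ i : ℕ, ∀ x ∈ frontier {x : X | 4 * (i:ℝ) * δ < gromovProd a x b},
      gromovProd a x b = 4 * (i:ℝ) * δ := by
    intro i x hx
    have := frontier_lt_subset_eq (continuous_const : Continuous fun _ : X => 4 * (i:ℝ) * δ) hg
    exact (this hx).symm
  -- track points lie on the frontier
  have hmemfront : ∀ i : ℕ, i < k →
      γ (4 * (i:ℝ) * δ) ∈ frontier {x : X | 4 * (i:ℝ) * δ < gromovProd a x b} := by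
    intro i hik
    have hopen : IsOpen {x : X | 4 * (i:ℝ) * δ < gromovProd a x b} :=
      isOpen_lt continuous_const hg
    have hiL := hmem i (le_of_lt hik)
    rw [frontier, hopen.interior_eq]
    constructor
    · rw [Metric.mem_closure_iff]
      intro ε hε
      obtain ⟨m, hm⟩ : ∃ m : ℝ, m = min (ε/2) (2*δ) := ⟨_, rfl⟩
      have hmin : 0 < m := hm ▸ lt_min (by linarith) (by linarith)
      have hmin2 : m ≤ 2*δ := hm ▸ min_le_right _ _
      have hmin3 : m ≤ ε/2 := hm ▸ min_le_left _ _
      have hik' : (i:ℝ) + 1 ≤ (k:ℝ) := by exact_mod_cast hik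
      have htL : 4 * (i:ℝ) * δ + m ∈ Set.Icc (0:ℝ) L := by
        constructor
        · have := hiL.1; linarith
        · rw [hL]; nlinarith
      refine ⟨γ (4 * (i:ℝ) * δ + m), ?_, ?_⟩
      · show 4 * (i:ℝ) * δ < gromovProd a (γ (4 * (i:ℝ) * δ + m)) b
        rw [hval _ htL]; linarith
      · rw [hdist _ hiL _ htL]
        rw [abs_of_nonpos (by linarith)]
        simp only [neg_sub]
        linarith
    · intro hmem'
      simp only [Set.mem_setOf_eq] at hmem'
      rw [hval _ hiL] at hmem'
      exact lt_irrefl _ hmem'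
  -- nonemptiness facts and final assembly
  refine ⟨?_, ?_, ?_, ?_, ?_, ?_⟩
  · intro i _ _
    exact isOpen_lt continuous_const hg
  · intro i _ _
    intro x hx
    simp only [Set.mem_setOf_eq] at *
    have h1 : (i:ℝ) ≤ (i:ℝ) + 1 := by linarith
    have : 4 * (i:ℝ) * δ < 4 * ((i:ℕ) + 1 : ℕ) * δ := by push_cast; nlinarith
    calc 4 * (i:ℝ) * δ < 4 * ((i:ℕ) + 1 : ℕ) * δ := this
      _ < gromovProd a x b := hx
  · intro i _ hi
    have : i < k := by omega
    exact hmemfront i this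
  · intro i hi1 hi2
    have hik : i + 1 ≤ k := by omega
    have hd : dist (γ (4 * (i:ℝ) * δ)) (γ (4 * ((i+1:ℕ):ℝ) * δ)) = 4 * δ := by
      rw [hdist _ (hmem i (by omega)) _ (hmem (i+1) hik)]
      push_cast
      rw [abs_of_nonpos (by nlinarith)]
      ring
    constructor
    · rw [hd]; norm_num; linarith
    · rw [hd]; norm_num; linarith
  · -- forward estimate
    intro i hi1 hi2 x hx
    have hik : i + 1 ≤ k - 1 := by omega
    have hik' : i + 1 < k := by omega
    have hgx : gromovProd a x b = 4 * (i:ℝ) * δ := hfront i x hx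
    have hpf : γ (4 * ((i+1:ℕ):ℝ) * δ) ∈
        frontier {x : X | 4 * ((i+1:ℕ):ℝ) * δ < gromovProd a x b} := hmemfront (i+1) hik'
    have hne : (frontier {x : X | 4 * ((i+1:ℕ):ℝ) * δ < gromovProd a x b}).Nonempty :=
      ⟨_, hpf⟩
    by_contra hcon
    push_neg at hcon
    rw [Metric.infDist_lt_iff hne] at hcon
    obtain ⟨y, hy, hdy⟩ := hcon
    have hgy : gromovProd a y b = 4 * ((i+1:ℕ):ℝ) * δ := hfront (i+1) y hy
    have hkey := key_estimate hδ H4 a b (γ (4 * (i:ℝ) * δ)) x y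
      (4 * (i:ℝ) * δ) (4 * ((i+1:ℕ):ℝ) * δ)
      (by rw [ha, hdist 0 ⟨le_refl 0, hL0⟩ _ (hmem i (by omega)), abs_sub_comm, sub_zero,
            abs_of_nonneg (hmem i (by omega)).1])
      (hval _ (hmem i (by omega))) hgx hgy
      (Or.inl (by push_cast; ring))
    linarith
  · -- backward estimate
    intro i hi1 hi2 x hx
    have hj1 : 1 ≤ i - 1 := by omega
    have hj2 : i - 1 < k := by omega
    have hgx : gromovProd a x b = 4 * (i:ℝ) * δ := hfront i x hx
    have hpf : γ (4 * ((i-1:ℕ):ℝ) * δ) ∈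
        frontier {x : X | 4 * ((i-1:ℕ):ℝ) * δ < gromovProd a x b} := hmemfront (i-1) hj2
    have hne : (frontier {x : X | 4 * ((i-1:ℕ):ℝ) * δ < gromovProd a x b}).Nonempty :=
      ⟨_, hpf⟩
    by_contra hcon
    push_neg at hcon
    rw [Metric.infDist_lt_iff hne] at hcon
    obtain ⟨y, hy, hdy⟩ := hcon
    have hgy : gromovProd a y b = 4 * ((i-1:ℕ):ℝ) * δ := hfront (i-1) y hy
    have hcast : ((i-1:ℕ):ℝ) = (i:ℝ) - 1 := by
      have : 1 ≤ i := by omega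
      push_cast [Nat.cast_sub this]; ring
    have hkey := key_estimate hδ H4 a b (γ (4 * (i:ℝ) * δ)) x y
      (4 * (i:ℝ) * δ) (4 * ((i-1:ℕ):ℝ) * δ)
      (by rw [ha, hdist 0 ⟨le_refl 0, hL0⟩ _ (hmem i (by omega)), abs_sub_comm, sub_zero,
            abs_of_nonneg (hmem i (by omega)).1])
      (hval _ (hmem i (by omega))) hgx hgy
      (Or.inr (by rw [hcast]; ring))
    linarith
end

section
/- Let (X,d) be a geodesic metric space that is δ-thin-hyperbolic. Then for every λ ≥ 1 and S > 0 there exists a constant H = H(δ, λ, S) > 0 such that any two (λ,S)-quasi-geodesics γ: [a,b] → X and γ': [a',b'] → X with the same start point (γ(a) = γ'(a')) and the same end point (γ(b) = γ'(b')) have images at Hausdorff distance at most H from each other. -/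
/-- `X` is `δ`-thin-hyperbolic: for every geodesic triangle, each point on any one of the
three sides lies within distance `δ` of the union of the other two sides. -/
def ThinTriangles (X : Type*) [MetricSpace X] (δ : ℝ) : Prop :=
  ∀ (a b c : X) (γab γbc γca : ℝ → X),
    IsGeodesicSegment γab a b → IsGeodesicSegment γbc b c → IsGeodesicSegment γca c a →
    (∀ s ∈ Set.Icc (0 : ℝ) (dist a b),
      Metric.infDist (γab s) (γbc '' Set.Icc 0 (dist b c) ∪ γca '' Set.Icc 0 (dist c a)) ≤ δ) ∧
    (∀ s ∈ Set.Icc (0 : ℝ) (dist b c),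
      Metric.infDist (γbc s) (γab '' Set.Icc 0 (dist a b) ∪ γca '' Set.Icc 0 (dist c a)) ≤ δ) ∧
    (∀ s ∈ Set.Icc (0 : ℝ) (dist c a),
      Metric.infDist (γca s) (γab '' Set.Icc 0 (dist a b) ∪ γbc '' Set.Icc 0 (dist b c)) ≤ δ)

/-- `γ` restricted to `[a, b]` is a `(λ, S)`-quasi-geodesic:
`λ⁻¹|s−t| − S ≤ d(γ s, γ t) ≤ λ|s−t| + S` for all `s, t ∈ [a, b]`. -/
def IsQuasiGeodesicOn {X : Type*} [MetricSpace X] (lam S : ℝ) (γ : ℝ → X) (a b : ℝ) : Prop :=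
  ∀ s ∈ Set.Icc a b, ∀ t ∈ Set.Icc a b,
    lam⁻¹ * |s - t| - S ≤ dist (γ s) (γ t) ∧ dist (γ s) (γ t) ≤ lam * |s - t| + S

universe u

open Metric Set

variable {X : Type*} [MetricSpace X]

theorem infDist_le_infDist_add_of_forall_infDist_le {x : X} {s t : Set X} {r : ℝ}
    (ht : t.Nonempty) (h : ∀ y ∈ t, infDist y s ≤ r) : infDist x s ≤ infDist x t + r := by
  have : infDist x s - r ≤ infDist x t := (le_infDist ht).2 fun y hy => by
    linarith [infDist_le_infDist_add_dist (x := x) (y := y) (s := s), h y hy]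
  linarith

theorem exists_mem_dist_le_of_infDist_le {Γ : Set X} {x y : X} {D : ℝ} (hΓ : Γ.Nonempty)
    (hy : infDist y Γ ≤ D) (hx : D - 1 ≤ infDist x Γ) (hxy : y ∈ Γ ∨ 2 * D + 2 ≤ dist x y) :
    ∃ y' ∈ Γ, dist y y' ≤ D + 1 ∧ D - 1 ≤ dist x y - dist y y' := by
  rcases hxy with hyΓ | hfar
  · refine ⟨y, hyΓ, ?_, ?_⟩
    · linarith [dist_self y, infDist_nonneg (x := y) (s := Γ)]
    · rw [dist_self, sub_zero]
      exact hx.trans (infDist_le_dist_of_mem hyΓ)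
  · obtain ⟨y', hy', hyy'⟩ := (infDist_lt_iff hΓ).1 (hy.trans_lt (lt_add_one D))
    exact ⟨y', hy', hyy'.le, by linarith⟩

theorem sq_le_four_mul_two_pow (n : ℕ) : n ^ 2 ≤ 4 * 2 ^ n := by
  induction n with
  | zero => norm_num
  | succ n ih =>
    rcases lt_or_ge n 3 with h | h
    · interval_cases n <;> norm_num
    · rw [pow_succ 2 n]
      nlinarith

theorem exists_two_pow_near {x : ℝ} (hx : 1 ≤ x) : ∃ k : ℕ, x ≤ 2 ^ k ∧ (2 : ℝ) ^ k ≤ 2 * x := by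
  obtain ⟨n, hn, hn'⟩ := exists_nat_pow_near hx one_lt_two
  exact ⟨n + 1, hn'.le, by rw [pow_succ]; linarith⟩

/-- Square `D - A ≤ δ k` and use `k ^ 2 ≤ 4 * 2 ^ k ≤ 4 C D`. -/
theorem le_of_le_add_mul_of_two_pow_le {A C D δ : ℝ} {k : ℕ} (hA : 0 ≤ A) (hD : 0 < D)
    (hDk : D ≤ A + δ * k) (hk : (2 : ℝ) ^ k ≤ C * D) : D ≤ 2 * A + 4 * C * δ ^ 2 := by
  have hk2 : (k : ℝ) ^ 2 ≤ 4 * (C * D) :=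
    (show (k : ℝ) ^ 2 ≤ 4 * 2 ^ k by exact_mod_cast sq_le_four_mul_two_pow k).trans (by linarith)
  have hC : 0 ≤ C := nonneg_of_mul_nonneg_left ((pow_pos two_pos k).le.trans hk) hD
  rcases le_or_gt D A with h | h
  · nlinarith [sq_nonneg δ]
  · have hsq : (D - A) ^ 2 ≤ δ ^ 2 * k ^ 2 := by nlinarith
    nlinarith [sq_nonneg δ]

theorem image_sub_Icc {α : Type*} (σ : ℝ → α) (L : ℝ) :
    (fun u => σ (L - u)) '' Icc 0 L = σ '' Icc 0 L := by
  rw [← image_image σ (fun u => L - u), image_const_sub_Icc, sub_self, sub_zero]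

namespace IsGeodesicSegment

variable {σ : ℝ → X} {x y : X}

theorem dist_eq (h : IsGeodesicSegment σ x y) {s t : ℝ} (hs : s ∈ Icc 0 (dist x y))
    (ht : t ∈ Icc 0 (dist x y)) : dist (σ s) (σ t) = |s - t| :=
  h.2.2 s hs t ht

theorem start_mem (h : IsGeodesicSegment σ x y) : x ∈ σ '' Icc 0 (dist x y) :=
  ⟨0, ⟨le_rfl, dist_nonneg⟩, h.1⟩

theorem dist_le_of_mem (h : IsGeodesicSegment σ x y) {p : X} (hp : p ∈ σ '' Icc 0 (dist x y)) :
    dist p x ≤ dist x y ∧ dist p y ≤ dist x y := by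
  obtain ⟨s, hs, rfl⟩ := hp
  have h₀ := h.dist_eq hs ⟨le_rfl, dist_nonneg⟩
  have h₁ := h.dist_eq hs ⟨dist_nonneg, le_rfl⟩
  rw [h.1, sub_zero, abs_of_nonneg hs.1] at h₀
  rw [h.2.1, abs_sub_comm, abs_of_nonneg (sub_nonneg.2 hs.2)] at h₁
  constructor <;> linarith [hs.1, hs.2]

theorem reverse (h : IsGeodesicSegment σ x y) :
    IsGeodesicSegment (fun u => σ (dist x y - u)) y x := by
  refine ⟨by simpa using h.2.1, by simp [dist_comm y x, h.1], fun s hs t ht => ?_⟩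
  rw [dist_comm y x] at hs ht
  rw [h.dist_eq ⟨by linarith [hs.2], by linarith [hs.1]⟩ ⟨by linarith [ht.2], by linarith [ht.1]⟩,
    abs_sub_comm]
  ring_nf

theorem restrict (h : IsGeodesicSegment σ x y) {s s' : ℝ} (hs : 0 ≤ s) (hss' : s ≤ s')
    (hs' : s' ≤ dist x y) : IsGeodesicSegment (fun u => σ (s + u)) (σ s) (σ s') := by
  have hd : dist (σ s) (σ s') = s' - s := by
    rw [h.dist_eq ⟨hs, hss'.trans hs'⟩ ⟨hs.trans hss', hs'⟩, abs_sub_comm,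
      abs_of_nonneg (sub_nonneg.2 hss')]
  refine ⟨by simp, by simp [hd], fun u hu v hv => ?_⟩
  rw [hd] at hu hv
  rw [h.dist_eq ⟨by linarith [hu.1], by linarith [hu.2]⟩ ⟨by linarith [hv.1], by linarith [hv.2]⟩]
  ring_nf

/-- `σ sy` is at distance `2D + 2` before `σ s₀`, or it is the start point `x` if that is closer
(and then `y' = x`); likewise `σ sz` after `σ s₀`. -/
theorem exists_anchors (h : IsGeodesicSegment σ x y) {Γ : Set X} (hx : x ∈ Γ) (hy : y ∈ Γ)
    {D s₀ : ℝ} (hD : ∀ s ∈ Icc 0 (dist x y), infDist (σ s) Γ ≤ D) (hs₀ : s₀ ∈ Icc 0 (dist x y))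
    (hfar : D - 1 ≤ infDist (σ s₀) Γ) :
    ∃ sy sz, sy ∈ Icc 0 s₀ ∧ sz ∈ Icc s₀ (dist x y) ∧ sz - sy ≤ 4 * D + 4 ∧
      ∃ y' ∈ Γ, ∃ z' ∈ Γ, dist (σ sy) y' ≤ D + 1 ∧ dist (σ sz) z' ≤ D + 1 ∧
        D - 1 ≤ dist (σ s₀) (σ sy) - dist (σ sy) y' ∧
        D - 1 ≤ dist (σ s₀) (σ sz) - dist (σ sz) z' := by
  set L := dist x y
  set R := 2 * D + 2
  have hR₀ : 0 ≤ R := by linarith [infDist_nonneg.trans (hD s₀ hs₀)]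
  obtain ⟨sy, hsy, hsyR, hsy_cases⟩ : ∃ sy ∈ Icc 0 s₀, s₀ - sy ≤ R ∧ (sy = 0 ∨ s₀ - sy = R) := by
    rcases le_total s₀ R with h | h
    · exact ⟨0, ⟨le_rfl, hs₀.1⟩, by linarith, .inl rfl⟩
    · exact ⟨s₀ - R, ⟨by linarith, by linarith⟩, by linarith, .inr (by ring)⟩
  obtain ⟨sz, hsz, hszR, hsz_cases⟩ : ∃ sz ∈ Icc s₀ L, sz - s₀ ≤ R ∧ (sz = L ∨ sz - s₀ = R) := by
    rcases le_total (L - s₀) R with h | h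
    · exact ⟨L, ⟨hs₀.2, le_rfl⟩, by linarith, .inl rfl⟩
    · exact ⟨s₀ + R, ⟨by linarith, by linarith⟩, by linarith, .inr (by ring)⟩
  have hsyL : sy ∈ Icc 0 L := ⟨hsy.1, hsy.2.trans hs₀.2⟩
  have hszL : sz ∈ Icc 0 L := ⟨hs₀.1.trans hsz.1, hsz.2⟩
  have hΓ : Γ.Nonempty := ⟨x, hx⟩
  obtain ⟨y', hy', hyy', hfar_y⟩ := exists_mem_dist_le_of_infDist_le hΓ (hD sy hsyL) hfar (by
    rcases hsy_cases with rfl | h'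
    · exact .inl (h.1 ▸ hx)
    · rw [h.dist_eq hs₀ hsyL, abs_of_nonneg (by linarith), h']
      exact .inr le_rfl)
  obtain ⟨z', hz', hzz', hfar_z⟩ := exists_mem_dist_le_of_infDist_le hΓ (hD sz hszL) hfar (by
    rcases hsz_cases with rfl | h'
    · exact .inl (h.2.1 ▸ hy)
    · rw [h.dist_eq hs₀ hszL, abs_sub_comm, abs_of_nonneg (by linarith), h']
      exact .inr le_rfl)
  exact ⟨sy, sz, hsy, hsz, by linarith, y', hy', z', hz', hyy', hzz', hfar_y, hfar_z⟩

end IsGeodesicSegment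

namespace ThinTriangles

variable {δ : ℝ}

theorem infDist_le (hthin : ThinTriangles X δ) {σ σ₁ σ₂ : ℝ → X} {x y z : X}
    (hσ : IsGeodesicSegment σ x z) (h₁ : IsGeodesicSegment σ₁ x y)
    (h₂ : IsGeodesicSegment σ₂ y z) :
    ∀ p ∈ σ '' Icc 0 (dist x z),
      infDist p (σ₁ '' Icc 0 (dist x y) ∪ σ₂ '' Icc 0 (dist y z)) ≤ δ := by
  have h := (hthin x y z σ₁ σ₂ _ h₁ h₂ hσ.reverse).2.2
  rw [dist_comm z x] at h
  rw [← image_sub_Icc]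
  exact forall_mem_image.2 h

/-- Cut along the diagonal from `y` to `w`. -/
theorem infDist_le_two_mul (hgeo : GeodesicSpace X) (hthin : ThinTriangles X δ)
    {σ σ₁ σ₂ σ₃ : ℝ → X} {x y z w : X} (hσ : IsGeodesicSegment σ x w)
    (h₁ : IsGeodesicSegment σ₁ x y) (h₂ : IsGeodesicSegment σ₂ y z)
    (h₃ : IsGeodesicSegment σ₃ z w) :
    ∀ p ∈ σ '' Icc 0 (dist x w), infDist p (σ₁ '' Icc 0 (dist x y) ∪ σ₂ '' Icc 0 (dist y z) ∪
      σ₃ '' Icc 0 (dist z w)) ≤ 2 * δ := by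
  obtain ⟨τ, hτ⟩ := hgeo y w
  intro p hp
  have hpτ := hthin.infDist_le hσ h₁ hτ p hp
  have hδ : 0 ≤ δ := infDist_nonneg.trans hpτ
  have hτ_near : ∀ q ∈ σ₁ '' Icc 0 (dist x y) ∪ τ '' Icc 0 (dist y w),
      infDist q (σ₁ '' Icc 0 (dist x y) ∪ σ₂ '' Icc 0 (dist y z) ∪ σ₃ '' Icc 0 (dist z w)) ≤ δ := by
    rintro q (hq | hq)
    · rw [infDist_zero_of_mem (mem_union_left _ (mem_union_left _ hq))]
      exact hδ
    · rw [union_assoc]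
      exact (infDist_le_infDist_of_subset subset_union_right ⟨y, Or.inl h₂.start_mem⟩).trans
        (hthin.infDist_le hτ h₂ h₃ q hq)
  linarith [infDist_le_infDist_add_of_forall_infDist_le (x := p)
    ⟨x, Or.inl h₁.start_mem⟩ hτ_near]

/-- In the quadrilateral `y y' z' z`, the point `x` of the side `yz` is `2δ`-close to the other
sides; the outer two are `r`-far from `x` and the middle one is `B`-close to `Γ`. -/
theorem sub_le_of_detour (hgeo : GeodesicSpace X) (hthin : ThinTriangles X δ) {Γ : Set X}
    {r B : ℝ} {σ g₁ g₂ g₃ : ℝ → X} {x y y' z' z : X} (hσ : IsGeodesicSegment σ y z)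
    (hx : x ∈ σ '' Icc 0 (dist y z)) (hg₁ : IsGeodesicSegment g₁ y y')
    (hg₂ : IsGeodesicSegment g₂ y' z') (hg₃ : IsGeodesicSegment g₃ z' z)
    (hxΓ : r ≤ infDist x Γ) (hy : r ≤ dist x y - dist y y') (hz : r ≤ dist x z - dist z' z)
    (hB : ∀ p ∈ g₂ '' Icc 0 (dist y' z'), infDist p Γ ≤ B) :
    r - B ≤ 2 * δ := by
  have hB₀ : 0 ≤ B := infDist_nonneg.trans (hB y' hg₂.start_mem)
  refine le_trans ?_ (hthin.infDist_le_two_mul hgeo hσ hg₁ hg₂ hg₃ x hx)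
  refine (le_infDist ⟨y, Or.inl (Or.inl hg₁.start_mem)⟩).2 ?_
  rintro p ((hp | hp) | hp)
  · linarith [(hg₁.dist_le_of_mem hp).1, dist_triangle x p y]
  · linarith [hB p hp, infDist_le_infDist_add_dist (x := x) (y := p) (s := Γ)]
  · linarith [(hg₃.dist_le_of_mem hp).2, dist_triangle x p z]

end ThinTriangles

def CoarselyLipschitzOn (lam S : ℝ) (f : ℝ → X) (a b : ℝ) : Prop :=
  ∀ s ∈ Icc a b, ∀ t ∈ Icc a b, dist (f s) (f t) ≤ lam * |s - t| + S

namespace CoarselyLipschitzOn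

variable {δ lam S : ℝ} {f : ℝ → X} {a b : ℝ}

theorem mono (hf : CoarselyLipschitzOn lam S f a b) {a' b' : ℝ} (ha : a ≤ a') (hb : b' ≤ b) :
    CoarselyLipschitzOn lam S f a' b' :=
  fun s hs t ht => hf s (Icc_subset_Icc ha hb hs) t (Icc_subset_Icc ha hb ht)

/-- Each halving of the parameter interval costs one thin triangle, that is `δ`. -/
theorem infDist_image_le (hgeo : GeodesicSpace X) (hthin : ThinTriangles X δ)
    (hlam : 0 ≤ lam) (k : ℕ) (hab : a ≤ b) (hlen : b - a ≤ 2 ^ k)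
    (hf : CoarselyLipschitzOn lam S f a b) {σ : ℝ → X} (hσ : IsGeodesicSegment σ (f a) (f b)) :
    ∀ p ∈ σ '' Icc 0 (dist (f a) (f b)), infDist p (f '' Icc a b) ≤ δ * k + (lam + S) := by
  induction k generalizing a b σ with
  | zero =>
    intro p hp
    have hba : |a - b| ≤ 1 := by
      rw [abs_sub_comm, abs_of_nonneg (sub_nonneg.2 hab)]
      simpa using hlen
    calc infDist p (f '' Icc a b) ≤ dist p (f a) :=
          infDist_le_dist_of_mem (mem_image_of_mem f ⟨le_rfl, hab⟩)
      _ ≤ dist (f a) (f b) := (hσ.dist_le_of_mem hp).1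
      _ ≤ lam * |a - b| + S := hf a ⟨le_rfl, hab⟩ b ⟨hab, le_rfl⟩
      _ ≤ δ * (0 : ℕ) + (lam + S) := by push_cast; nlinarith
  | succ k ih =>
    set m := (a + b) / 2 with hm
    rw [pow_succ] at hlen
    have ham : a ≤ m := by linarith
    have hmb : m ≤ b := by linarith
    obtain ⟨σ₁, hσ₁⟩ := hgeo (f a) (f m)
    obtain ⟨σ₂, hσ₂⟩ := hgeo (f m) (f b)
    have hhalves : ∀ q ∈ σ₁ '' Icc 0 (dist (f a) (f m)) ∪ σ₂ '' Icc 0 (dist (f m) (f b)),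
        infDist q (f '' Icc a b) ≤ δ * k + (lam + S) := by
      rintro q (hq | hq)
      · refine (infDist_le_infDist_of_subset (image_mono (Icc_subset_Icc le_rfl hmb))
          ⟨f a, mem_image_of_mem f ⟨le_rfl, ham⟩⟩).trans ?_
        exact ih ham (by linarith) (hf.mono le_rfl hmb) hσ₁ q hq
      · refine (infDist_le_infDist_of_subset (image_mono (Icc_subset_Icc ham le_rfl))
          ⟨f b, mem_image_of_mem f ⟨hmb, le_rfl⟩⟩).trans ?_
        exact ih hmb (by linarith) (hf.mono ham le_rfl) hσ₂ q hq
    intro p hp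
    have hp' := hthin.infDist_le hσ hσ₁ hσ₂ p hp
    have := infDist_le_infDist_add_of_forall_infDist_le (x := p)
      ⟨f a, Or.inl hσ₁.start_mem⟩ hhalves
    push_cast
    linarith

theorem infDist_image_le_of_mem (hgeo : GeodesicSpace X) (hthin : ThinTriangles X δ)
    (hlam : 0 ≤ lam) (hf : CoarselyLipschitzOn lam S f a b) {t t' : ℝ} (ht : t ∈ Icc a b)
    (ht' : t' ∈ Icc a b) (k : ℕ) (hk : |t - t'| ≤ 2 ^ k) {σ : ℝ → X}
    (hσ : IsGeodesicSegment σ (f t) (f t')) :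
    ∀ p ∈ σ '' Icc 0 (dist (f t) (f t')), infDist p (f '' Icc a b) ≤ δ * k + (lam + S) := by
  wlog htt' : t ≤ t' generalizing t t' σ
  · have h := this ht' ht (by rwa [abs_sub_comm]) hσ.reverse (le_of_not_ge htt')
    rwa [dist_comm (f t') (f t), image_sub_Icc] at h
  intro p hp
  refine (infDist_le_infDist_of_subset (image_mono (Icc_subset_Icc ht.1 ht'.2))
    ⟨f t, mem_image_of_mem f ⟨le_rfl, htt'⟩⟩).trans ?_
  rw [abs_sub_comm, abs_of_nonneg (sub_nonneg.2 htt')] at hk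
  exact (hf.mono ht.1 ht'.2).infDist_image_le hgeo hthin hlam k htt' hk hσ p hp

end CoarselyLipschitzOn

/-- `le_of_le_add_mul_of_two_pow_le` applied with `A = 1 + 2δ + λ + S` and `C = 2λ(12 + S)`. -/
noncomputable def geodesicToQuasiGeodesicBound (δ lam S : ℝ) : ℝ :=
  2 * (1 + 2 * δ + lam + S) + 8 * lam * (12 + S) * δ ^ 2

/-- The bound of `IsQuasiGeodesicOn.infDist_geodesic_image_le_of_le` at
`r = geodesicToQuasiGeodesicBound δ lam S + 1`. -/
noncomputable def quasiGeodesicToGeodesicBound (δ lam S : ℝ) : ℝ :=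
  lam * (lam * (2 * (geodesicToQuasiGeodesicBound δ lam S + 1) + 1 + S)) + S +
    (geodesicToQuasiGeodesicBound δ lam S + 1)

theorem one_le_geodesicToQuasiGeodesicBound {δ lam S : ℝ} (hδ : 0 ≤ δ) (hlam : 0 ≤ lam)
    (hS : 0 ≤ S) : 1 ≤ geodesicToQuasiGeodesicBound δ lam S := by
  have : 0 ≤ 8 * lam * (12 + S) * δ ^ 2 := by positivity
  unfold geodesicToQuasiGeodesicBound
  linarith

theorem quasiGeodesicToGeodesicBound_pos {δ lam S : ℝ} (hδ : 0 ≤ δ) (hlam : 0 ≤ lam)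
    (hS : 0 ≤ S) : 0 < quasiGeodesicToGeodesicBound δ lam S := by
  have := one_le_geodesicToQuasiGeodesicBound hδ hlam hS
  unfold quasiGeodesicToGeodesicBound
  positivity

namespace IsQuasiGeodesicOn

variable {δ lam S : ℝ} {γ : ℝ → X} {a b : ℝ}

theorem coarselyLipschitzOn (hγ : IsQuasiGeodesicOn lam S γ a b) :
    CoarselyLipschitzOn lam S γ a b :=
  fun s hs t ht => (hγ s hs t ht).2

theorem abs_sub_le (hγ : IsQuasiGeodesicOn lam S γ a b) (hlam : 0 < lam) {s t : ℝ}
    (hs : s ∈ Icc a b) (ht : t ∈ Icc a b) : |s - t| ≤ lam * (dist (γ s) (γ t) + S) := by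
  have h := (hγ s hs t ht).1
  calc |s - t| = lam * (lam⁻¹ * |s - t|) := by field_simp
    _ ≤ lam * (dist (γ s) (γ t) + S) := by gcongr; linarith

/-- The detour around `σ s₀` through `γ` between the points given by
`IsGeodesicSegment.exists_anchors` has parameter length at most `λ (6D + 6 + S)`. -/
theorem le_of_infDist_image_le (hgeo : GeodesicSpace X) (hthin : ThinTriangles X δ)
    (hlam : 0 < lam) (hγ : IsQuasiGeodesicOn lam S γ a b) (hab : a ≤ b) {σ : ℝ → X}
    (hσ : IsGeodesicSegment σ (γ a) (γ b)) {D s₀ : ℝ}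
    (hD : ∀ s ∈ Icc 0 (dist (γ a) (γ b)), infDist (σ s) (γ '' Icc a b) ≤ D)
    (hs₀ : s₀ ∈ Icc 0 (dist (γ a) (γ b))) (hfar : D - 1 ≤ infDist (σ s₀) (γ '' Icc a b))
    (k : ℕ) (hk : lam * (6 * D + 6 + S) ≤ 2 ^ k) :
    D ≤ 1 + 2 * δ + lam + S + δ * k := by
  obtain ⟨sy, sz, hsy, hsz, hszsy, _, ⟨ty, hty, rfl⟩, _, ⟨tz, htz, rfl⟩, hyy', hzz', hy, hz⟩ :=
    hσ.exists_anchors (mem_image_of_mem γ (left_mem_Icc.2 hab))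
      (mem_image_of_mem γ (right_mem_Icc.2 hab)) hD hs₀ hfar
  obtain ⟨g₁, hg₁⟩ := hgeo (σ sy) (γ ty)
  obtain ⟨g₂, hg₂⟩ := hgeo (γ ty) (γ tz)
  obtain ⟨g₃, hg₃⟩ := hgeo (γ tz) (σ sz)
  have hsysz : sy ≤ sz := hsy.2.trans hsz.1
  have hyz : dist (σ sy) (σ sz) = sz - sy := by
    rw [hσ.dist_eq ⟨hsy.1, hsy.2.trans hs₀.2⟩ ⟨hs₀.1.trans hsz.1, hsz.2⟩, abs_sub_comm,
      abs_of_nonneg (sub_nonneg.2 hsysz)]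
  have htt' : |ty - tz| ≤ 2 ^ k := by
    refine (hγ.abs_sub_le hlam hty htz).trans (le_trans ?_ hk)
    gcongr
    linarith [dist_triangle4 (γ ty) (σ sy) (σ sz) (γ tz), dist_comm (γ ty) (σ sy)]
  have hx : σ s₀ ∈ (fun u => σ (sy + u)) '' Icc 0 (dist (σ sy) (σ sz)) :=
    ⟨s₀ - sy, ⟨sub_nonneg.2 hsy.2, by rw [hyz]; linarith [hsz.1]⟩, by simp⟩
  have := hthin.sub_le_of_detour hgeo (hσ.restrict hsy.1 hsysz hsz.2) hx hg₁ hg₂ hg₃ hfar hy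
    (by rwa [dist_comm (γ tz)])
    (hγ.coarselyLipschitzOn.infDist_image_le_of_mem hgeo hthin hlam.le hty htz k htt' hg₂)
  linarith

theorem infDist_image_le (hgeo : GeodesicSpace X) (hthin : ThinTriangles X δ) (hδ : 0 ≤ δ)
    (hlam : 1 ≤ lam) (hS : 0 ≤ S) (hγ : IsQuasiGeodesicOn lam S γ a b) {σ : ℝ → X}
    (hσ : IsGeodesicSegment σ (γ a) (γ b)) :
    ∀ s ∈ Icc 0 (dist (γ a) (γ b)),
      infDist (σ s) (γ '' Icc a b) ≤ geodesicToQuasiGeodesicBound δ lam S := by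
  have h₁ := one_le_geodesicToQuasiGeodesicBound hδ (zero_le_one.trans hlam) hS
  rcases lt_or_ge b a with hba | hab
  · intro s _
    rw [Icc_eq_empty hba.not_ge, image_empty, infDist_empty]
    linarith
  set L := dist (γ a) (γ b)
  set Γ := γ '' Icc a b
  have hbdd : BddAbove ((fun s => infDist (σ s) Γ) '' Icc 0 L) := by
    refine ⟨L, forall_mem_image.2 fun s hs => ?_⟩
    exact (infDist_le_dist_of_mem (mem_image_of_mem γ (left_mem_Icc.2 hab))).trans
      (hσ.dist_le_of_mem (mem_image_of_mem σ hs)).1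
  set D := sSup ((fun s => infDist (σ s) Γ) '' Icc 0 L)
  have hD : ∀ s ∈ Icc 0 L, infDist (σ s) Γ ≤ D :=
    fun s hs => le_csSup hbdd (mem_image_of_mem _ hs)
  suffices D ≤ geodesicToQuasiGeodesicBound δ lam S from fun s hs => (hD s hs).trans this
  rcases le_or_gt D 1 with hD₁ | hD₁
  · linarith
  obtain ⟨_, ⟨s₀, hs₀, rfl⟩, hfar⟩ :=
    exists_lt_of_lt_csSup ((nonempty_Icc.2 dist_nonneg).image _) (sub_one_lt D)
  obtain ⟨k, hk, hk'⟩ := exists_two_pow_near (x := lam * (6 * D + 6 + S)) (by nlinarith)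
  have hDk := hγ.le_of_infDist_image_le hgeo hthin (by linarith) hab hσ hD hs₀ hfar.le k hk
  have hkD : (2 : ℝ) ^ k ≤ 2 * lam * (12 + S) * D := by
    have : 6 * D + 6 + S ≤ (12 + S) * D := by nlinarith
    nlinarith [mul_le_mul_of_nonneg_left this (zero_le_one.trans hlam)]
  have := le_of_le_add_mul_of_two_pow_le (by linarith) (by linarith) hDk hkD
  unfold geodesicToQuasiGeodesicBound
  linarith

theorem abs_sub_le_of_dist_le (hγ : IsQuasiGeodesicOn lam S γ a b) (hlam : 0 < lam)
    {t t' r : ℝ} (ht : t ∈ Icc a b) (ht' : t' ∈ Icc a b) {p p' : X} (hpp' : dist p p' ≤ 1)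
    (h : dist p (γ t) ≤ r) (h' : dist p' (γ t') ≤ r) : |t - t'| ≤ lam * (2 * r + 1 + S) := by
  refine (hγ.abs_sub_le hlam ht ht').trans ?_
  gcongr
  linarith [dist_triangle4 (γ t) p p' (γ t'), dist_comm (γ t) p]

/-- A discrete intermediate value argument along the points `σ (min n L)`, `n ∈ ℕ`, of the
geodesic: parameters of `γ` close to consecutive points are close to each other. -/
theorem infDist_geodesic_image_le_of_le (hlam : 0 < lam) (hγ : IsQuasiGeodesicOn lam S γ a b)
    {σ : ℝ → X} (hσ : IsGeodesicSegment σ (γ a) (γ b)) {r : ℝ}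
    (hnear : ∀ s ∈ Icc 0 (dist (γ a) (γ b)), ∃ t ∈ Icc a b, dist (σ s) (γ t) ≤ r) (n : ℕ)
    {t₁ : ℝ} (ht₁ : t₁ ∈ Icc a b) (h₁ : dist (σ (min (n : ℝ) (dist (γ a) (γ b)))) (γ t₁) ≤ r) :
    ∀ t ∈ Icc a t₁, infDist (γ t) (σ '' Icc 0 (dist (γ a) (γ b))) ≤
      lam * (lam * (2 * r + 1 + S)) + S + r := by
  set L := dist (γ a) (γ b)
  have hmin : ∀ m : ℕ, min (m : ℝ) L ∈ Icc 0 L :=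
    fun m => ⟨le_min m.cast_nonneg dist_nonneg, min_le_right _ _⟩
  have hclose : ∀ {t₀ t₁ t s : ℝ}, t₀ ∈ Icc a b → t₁ ∈ Icc a b → t ∈ Icc t₀ t₁ →
      |t₀ - t₁| ≤ lam * (2 * r + 1 + S) → s ∈ Icc 0 L → dist (σ s) (γ t₁) ≤ r →
      infDist (γ t) (σ '' Icc 0 L) ≤ lam * (lam * (2 * r + 1 + S)) + S + r := by
    intro t₀ t₁ t s ht₀ ht₁ ht htt hs h
    have htt' : |t - t₁| ≤ lam * (2 * r + 1 + S) := by
      rw [abs_sub_comm, abs_of_nonneg (sub_nonneg.2 ht.2)]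
      rw [abs_sub_comm, abs_of_nonneg (sub_nonneg.2 (ht.1.trans ht.2))] at htt
      linarith [ht.1]
    calc infDist (γ t) (σ '' Icc 0 L) ≤ dist (γ t) (σ s) :=
          infDist_le_dist_of_mem (mem_image_of_mem σ hs)
      _ ≤ dist (γ t) (γ t₁) + dist (σ s) (γ t₁) := by
          rw [dist_comm (σ s)]; exact dist_triangle _ _ _
      _ ≤ lam * |t - t₁| + S + r :=
          add_le_add (hγ t ⟨ht₀.1.trans ht.1, ht.2.trans ht₁.2⟩ t₁ ht₁).2 h
      _ ≤ lam * (lam * (2 * r + 1 + S)) + S + r := by gcongr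
  induction n generalizing t₁ with
  | zero =>
    have ha : a ∈ Icc a b := ⟨le_rfl, ht₁.1.trans ht₁.2⟩
    have h₀ : dist (σ 0) (γ t₁) ≤ r := by
      rwa [Nat.cast_zero, min_eq_left (show (0 : ℝ) ≤ L from dist_nonneg)] at h₁
    have hσa : dist (σ 0) (γ a) ≤ r := by
      rw [hσ.1, dist_self]
      exact dist_nonneg.trans h₀
    intro t ht
    exact hclose ha ht₁ ht (hγ.abs_sub_le_of_dist_le hlam ha ht₁ (by simp) hσa h₀)
      ⟨le_rfl, dist_nonneg⟩ h₀
  | succ n ih =>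
    intro t ht
    obtain ⟨t₀, ht₀, h₀⟩ := hnear _ (hmin n)
    rcases le_total t t₀ with h | h
    · exact ih ht₀ h₀ t ⟨ht.1, h⟩
    have hstep : dist (σ (min (n : ℝ) L)) (σ (min ((n + 1 : ℕ) : ℝ) L)) ≤ 1 := by
      rw [hσ.dist_eq (hmin n) (hmin (n + 1))]
      refine (abs_min_sub_min_le_max _ _ _ _).trans ?_
      simp
    exact hclose ht₀ ht₁ ⟨h, ht.2⟩ (hγ.abs_sub_le_of_dist_le hlam ht₀ ht₁ hstep h₀ h₁)
      (hmin (n + 1)) h₁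

theorem infDist_geodesic_image_le (hgeo : GeodesicSpace X) (hthin : ThinTriangles X δ)
    (hδ : 0 ≤ δ) (hlam : 1 ≤ lam) (hS : 0 ≤ S) (hγ : IsQuasiGeodesicOn lam S γ a b) {σ : ℝ → X}
    (hσ : IsGeodesicSegment σ (γ a) (γ b)) :
    ∀ t ∈ Icc a b, infDist (γ t) (σ '' Icc 0 (dist (γ a) (γ b))) ≤
      quasiGeodesicToGeodesicBound δ lam S := by
  intro t ht
  have hab : a ≤ b := ht.1.trans ht.2
  have hnear : ∀ s ∈ Icc 0 (dist (γ a) (γ b)),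
      ∃ t ∈ Icc a b, dist (σ s) (γ t) ≤ geodesicToQuasiGeodesicBound δ lam S + 1 := by
    intro s hs
    obtain ⟨_, ⟨t, ht, rfl⟩, h⟩ :=
      (infDist_lt_iff ⟨γ a, mem_image_of_mem γ (left_mem_Icc.2 hab)⟩).1
        ((hγ.infDist_image_le hgeo hthin hδ hlam hS hσ s hs).trans_lt (lt_add_one _))
    exact ⟨t, ht, h.le⟩
  have hend : σ (min (⌈dist (γ a) (γ b)⌉₊ : ℝ) (dist (γ a) (γ b))) = γ b := by
    rw [min_eq_right (Nat.le_ceil _), hσ.2.1]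
  have h₁ := one_le_geodesicToQuasiGeodesicBound hδ (zero_le_one.trans hlam) hS
  exact hγ.infDist_geodesic_image_le_of_le (by linarith) hσ hnear _ (right_mem_Icc.2 hab)
    (by rw [hend, dist_self]; linarith) t ht

theorem infDist_image_le_of_endpoints_eq (hgeo : GeodesicSpace X) (hthin : ThinTriangles X δ)
    (hδ : 0 ≤ δ) (hlam : 1 ≤ lam) (hS : 0 ≤ S) (hγ : IsQuasiGeodesicOn lam S γ a b)
    {γ' : ℝ → X} {a' b' : ℝ} (hγ' : IsQuasiGeodesicOn lam S γ' a' b') (ha : γ a = γ' a')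
    (hb : γ b = γ' b') :
    ∀ t ∈ Icc a b, infDist (γ t) (γ' '' Icc a' b') ≤
      geodesicToQuasiGeodesicBound δ lam S + quasiGeodesicToGeodesicBound δ lam S := by
  obtain ⟨σ, hσ⟩ := hgeo (γ a) (γ b)
  have hσ' : IsGeodesicSegment σ (γ' a') (γ' b') := by rwa [← ha, ← hb]
  have hσγ' := hγ'.infDist_image_le hgeo hthin hδ hlam hS hσ'
  rw [← ha, ← hb] at hσγ'
  intro t ht
  have := infDist_le_infDist_add_of_forall_infDist_le (x := γ t) ⟨γ a, hσ.start_mem⟩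
    (forall_mem_image.2 hσγ')
  linarith [hγ.infDist_geodesic_image_le hgeo hthin hδ hlam hS hσ t ht]

end IsQuasiGeodesicOn

/-- **Stability of geodesics.** In a `δ`-thin-hyperbolic geodesic metric space, for every
`λ ≥ 1` and `S > 0` there is a constant `H = H(δ, λ, S) > 0` such that any two
`(λ, S)`-quasi-geodesics with the same start- and endpoints have images at Hausdorff
distance at most `H` from each other. -/
theorem stability_of_geodesics (δ lam S : ℝ) (hδ : 0 ≤ δ) (hlam : 1 ≤ lam) (hS : 0 < S) :
    ∃ H : ℝ, 0 < H ∧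
      ∀ (X : Type u) [inst : MetricSpace X], GeodesicSpace X → ThinTriangles X δ →
        ∀ (a b a' b' : ℝ) (γ γ' : ℝ → X),
          IsQuasiGeodesicOn lam S γ a b → IsQuasiGeodesicOn lam S γ' a' b' →
          γ a = γ' a' → γ b = γ' b' →
          Metric.hausdorffDist (γ '' Set.Icc a b) (γ' '' Set.Icc a' b') ≤ H := by
  have hlam₀ : 0 ≤ lam := zero_le_one.trans hlam
  have hH := add_pos (zero_lt_one.trans_le (one_le_geodesicToQuasiGeodesicBound hδ hlam₀ hS.le))
    (quasiGeodesicToGeodesicBound_pos hδ hlam₀ hS.le)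
  refine ⟨_, hH, fun X _ hgeo hthin a b a' b' γ γ' hγ hγ' ha hb => ?_⟩
  exact hausdorffDist_le_of_infDist hH.le
    (forall_mem_image.2 (hγ.infDist_image_le_of_endpoints_eq hgeo hthin hδ hlam hS.le hγ' ha hb))
    (forall_mem_image.2
      (hγ'.infDist_image_le_of_endpoints_eq hgeo hthin hδ hlam hS.le hγ ha.symm hb.symm))
end

section
/- Let Z be a set and q: Z × Z → [0,∞) a quasi-metric with constant K ≤ 2, i.e., q is symmetric, q(x,y) = 0 if and only if x = y, and q(x,z) ≤ K·max{q(x,y), q(y,z)} for all x, y, z ∈ Z. Then there exists a metric ρ on Z with (1/4)·q(x,y) ≤ ρ(x,y) ≤ q(x,y) for all x, y ∈ Z; in particular, every quasi-metric with constant at most 2 is bi-Lipschitz equivalent to a metric. -/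
namespace QMAux

variable {Z : Type*}

/-- plain chain cost: sum of q along x, l..., y -/
def cost (q : Z → Z → ℝ) : Z → List Z → Z → ℝ
  | x, [], y => q x y
  | x, a :: l, y => q x a + cost q a l y

/-- all edges doubled except the last one -/
def M (q : Z → Z → ℝ) : Z → List Z → Z → ℝ
  | x, [], y => q x y
  | x, a :: l, y => 2 * q x a + M q a l y

/-- all edges doubled except first and last -/
def W (q : Z → Z → ℝ) : Z → List Z → Z → ℝ
  | x, [], y => q x y
  | x, a :: l, y => q x a + M q a l y

/-- all edges doubled -/
def D (q : Z → Z → ℝ) : Z → List Z → Z → ℝ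
  | x, [], y => 2 * q x y
  | x, a :: l, y => 2 * q x a + D q a l y

/-- all edges doubled except the first one -/
def U (q : Z → Z → ℝ) : Z → List Z → Z → ℝ
  | x, [], y => q x y
  | x, a :: l, y => q x a + D q a l y

variable (q : Z → Z → ℝ)

section nonneg
variable (hnn : ∀ x y, 0 ≤ q x y)
include hnn

lemma cost_nonneg : ∀ (l : List Z) (x y : Z), 0 ≤ cost q x l y := by
  intro l
  induction l with
  | nil => intro x y; simpa [cost] using hnn x y
  | cons a l ih => intro x y; simp only [cost]; have := hnn x a; have := ih a y; linarith

lemma M_nonneg : ∀ (l : List Z) (x y : Z), 0 ≤ M q x l y := by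
  intro l
  induction l with
  | nil => intro x y; simpa [M] using hnn x y
  | cons a l ih => intro x y; simp only [M]; have := hnn x a; have := ih a y; linarith

lemma D_nonneg : ∀ (l : List Z) (x y : Z), 0 ≤ D q x l y := by
  intro l
  induction l with
  | nil => intro x y; simp only [D]; have := hnn x y; linarith
  | cons a l ih => intro x y; simp only [D]; have := hnn x a; have := ih a y; linarith

lemma W_nonneg : ∀ (l : List Z) (x y : Z), 0 ≤ W q x l y := by
  intro l
  match l with
  | [] => intro x y; simpa [W] using hnn x y
  | a :: l => intro x y; simp only [W]; have := hnn x a; have := M_nonneg q hnn l a y; linarith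

lemma U_nonneg : ∀ (l : List Z) (x y : Z), 0 ≤ U q x l y := by
  intro l
  match l with
  | [] => intro x y; simpa [U] using hnn x y
  | a :: l => intro x y; simp only [U]; have := hnn x a; have := D_nonneg q hnn l a y; linarith

lemma M_le_D : ∀ (l : List Z) (x y : Z), M q x l y ≤ D q x l y := by
  intro l
  induction l with
  | nil => intro x y; simp only [M, D]; have := hnn x y; linarith
  | cons a l ih => intro x y; simp only [M, D]; have := ih a y; linarith

lemma W_le_M : ∀ (l : List Z) (x y : Z), W q x l y ≤ M q x l y := by
  intro l
  match l with
  | [] => intro x y; simp [W, M]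
  | a :: l => intro x y; simp only [W, M]; have := hnn x a; linarith

lemma W_le_U : ∀ (l : List Z) (x y : Z), W q x l y ≤ U q x l y := by
  intro l
  match l with
  | [] => intro x y; simp [W, U]
  | a :: l => intro x y; simp only [W, U]; have := M_le_D q hnn l a y; linarith

lemma M_le_two_cost : ∀ (l : List Z) (x y : Z), M q x l y ≤ 2 * cost q x l y := by
  intro l
  induction l with
  | nil => intro x y; simp only [M, cost]; have := hnn x y; linarith
  | cons a l ih => intro x y; simp only [M, cost]; have := ih a y; linarith

lemma W_le_two_cost : ∀ (l : List Z) (x y : Z), W q x l y ≤ 2 * cost q x l y := by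
  intro l
  match l with
  | [] => intro x y; simp only [W, cost]; have := hnn x y; linarith
  | a :: l => intro x y; simp only [W, cost]; have := M_le_two_cost q hnn l a y; have := hnn x a; linarith

end nonneg

lemma D_append : ∀ (l : List Z) (d c b : Z),
    D q d (l ++ [c]) b = D q d l c + 2 * q c b := by
  intro l
  induction l with
  | nil => intro d c b; simp [D]
  | cons a l ih => intro d c b; simp only [List.cons_append, List.append_eq, D, ih]; ring

lemma U_append : ∀ (l : List Z) (x c b : Z),
    U q x (l ++ [c]) b = U q x l c + 2 * q c b := by
  intro l
  match l with
  | [] => intro x c b; simp [U, D]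
  | a :: l => intro x c b; simp only [List.cons_append, List.append_eq, U, D_append]; ring

lemma M_append_single : ∀ (l : List Z) (d c b : Z),
    M q d (l ++ [c]) b = D q d l c + q c b := by
  intro l
  induction l with
  | nil => intro d c b; simp [M, D]
  | cons a l ih => intro d c b; simp only [List.cons_append, List.append_eq, M, D, ih]; ring

lemma W_append_single : ∀ (l : List Z) (x c b : Z),
    W q x (l ++ [c]) b = U q x l c + q c b := by
  intro l
  match l with
  | [] => intro x c b; simp [W, U, M]
  | a :: l => intro x c b; simp only [List.cons_append, List.append_eq, W, U, M_append_single]; ring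

lemma M_split : ∀ (l₁ : List Z) (d c y : Z) (l₂ : List Z),
    M q d (l₁ ++ c :: l₂) y = D q d l₁ c + M q c l₂ y := by
  intro l₁
  induction l₁ with
  | nil => intro d c y l₂; simp [M, D]
  | cons a l ih => intro d c y l₂; simp only [List.cons_append, List.append_eq, M, D, ih]; ring

lemma W_split : ∀ (lp : List Z) (x c y : Z) (l₂ : List Z),
    W q x (lp ++ c :: l₂) y = U q x lp c + M q c l₂ y := by
  intro lp
  match lp with
  | [] => intro x c y l₂; simp [W, U]
  | a :: l => intro x c y l₂; simp only [List.cons_append, List.append_eq, W, U, M_split]; ring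

lemma cost_concat : ∀ (l₁ : List Z) (x y z : Z) (l₂ : List Z),
    cost q x (l₁ ++ y :: l₂) z = cost q x l₁ y + cost q y l₂ z := by
  intro l₁
  induction l₁ with
  | nil => intro x y z l₂; simp [cost]
  | cons a l ih => intro x y z l₂; simp only [List.cons_append, List.append_eq, cost, ih]; ring

lemma cost_reverse (hsymm : ∀ x y, q x y = q y x) :
    ∀ (l : List Z) (x y : Z), cost q x l y = cost q y l.reverse x := by
  intro l
  induction l with
  | nil => intro x y; simp [cost, hsymm x y]
  | cons a l ih =>
    intro x y
    simp only [cost, List.reverse_cons]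
    rw [cost_concat q l.reverse y a x [], ← ih a y]
    simp only [cost]
    rw [hsymm a x]
    ring

section main
variable (K : ℝ) (hK1 : 1 ≤ K) (hK2 : K ≤ 2)
  (hnn : ∀ x y, 0 ≤ q x y)
  (hquasi : ∀ x y z, q x z ≤ K * max (q x y) (q y z))

include hK1 hK2 hnn hquasi

lemma help (n : ℕ)
    (IH : ∀ l : List Z, l.length ≤ n → ∀ x y, q x y ≤ K * W q x l y) :
    ∀ (L Lp : List Z) (c x y : Z) (T : ℝ),
      Lp.length + 1 + L.length ≤ n + 1 →
      U q x Lp c ≤ T / 2 →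
      U q x Lp c + M q c L y = T →
      q x y ≤ K * T := by
  intro L
  induction L with
  | nil =>
    intro Lp c x y T hlen hU hT
    simp only [M] at hT
    have hUnn := U_nonneg q hnn Lp x c
    have hWU := W_le_U q hnn Lp x c
    have hWnn := W_nonneg q hnn Lp x c
    have hxc : q x c ≤ T := by
      have h := IH Lp (by simp only [List.length_nil] at hlen; omega) x c
      nlinarith
    have hcy : q c y ≤ T := by linarith
    have := hquasi x c y
    have hmax : max (q x c) (q c y) ≤ T := max_le hxc hcy
    calc q x y ≤ K * max (q x c) (q c y) := this
      _ ≤ K * T := by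
          apply mul_le_mul_of_nonneg_left hmax (by linarith)
  | cons b L' ihL =>
    intro Lp c x y T hlen hU hT
    simp only [M] at hT
    simp only [List.length_cons] at hlen
    have hUnn := U_nonneg q hnn Lp x c
    have hMnn := M_nonneg q hnn L' b y
    have hqcb := hnn c b
    by_cases h1 : U q x Lp c + 2 * q c b ≤ T / 2
    · apply ihL (Lp ++ [c]) b x y T
      · simp only [List.length_append, List.length_singleton]; omega
      · rw [U_append]; exact h1
      · rw [U_append]; linarith
    · push_neg at h1
      by_cases h3 : T / 2 ≤ U q x Lp c + q c b
      · -- split at c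
        have hxc : q x c ≤ T := by
          have h := IH Lp (by omega) x c
          have hWU := W_le_U q hnn Lp x c
          have hWnn := W_nonneg q hnn Lp x c
          nlinarith
        have hcy : q c y ≤ T := by
          have h := IH (b :: L') (by simp; omega) c y
          have hW : W q c (b :: L') y = q c b + M q b L' y := by simp [W, M]
          have hWnn := W_nonneg q hnn (b :: L') c y
          rw [hW] at h hWnn
          nlinarith
        have hmax : max (q x c) (q c y) ≤ T := max_le hxc hcy
        calc q x y ≤ K * max (q x c) (q c y) := hquasi x c y
          _ ≤ K * T := mul_le_mul_of_nonneg_left hmax (by linarith)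
      · push_neg at h3
        -- split at b
        have hxb : q x b ≤ T := by
          have h := IH (Lp ++ [c]) (by simp; omega) x b
          rw [W_append_single] at h
          nlinarith
        have hby : q b y ≤ T := by
          have h := IH L' (by omega) b y
          have hWM := W_le_M q hnn L' b y
          have hWnn := W_nonneg q hnn L' b y
          nlinarith
        have hmax : max (q x b) (q b y) ≤ T := max_le hxb hby
        calc q x y ≤ K * max (q x b) (q b y) := hquasi x b y
          _ ≤ K * T := mul_le_mul_of_nonneg_left hmax (by linarith)

lemma main : ∀ (n : ℕ) (l : List Z), l.length ≤ n → ∀ x y, q x y ≤ K * W q x l y := by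
  intro n
  induction n with
  | zero =>
    intro l hl x y
    have hl0 : l = [] := List.length_eq_zero_iff.mp (Nat.le_zero.mp hl)
    subst hl0
    simp only [W]
    nlinarith [hnn x y]
  | succ n IHn =>
    intro l hl x y
    match l with
    | [] =>
      simp only [W]
      nlinarith [hnn x y]
    | a :: l' =>
      set T := W q x (a :: l') y with hTdef
      have hTW : T = q x a + M q a l' y := by simp [hTdef, W]
      have hMnn := M_nonneg q hnn l' a y
      have hqxa := hnn x a
      by_cases h : q x a ≤ T / 2
      · apply help q K hK1 hK2 hnn hquasi n IHn l' [] a x y T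
        · simp only [List.length_cons] at hl; simp only [List.length_nil]; omega
        · simpa [U] using h
        · simp [U]; linarith [hTW]
      · push_neg at h
        have hxa : q x a ≤ T := by linarith
        have hay : q a y ≤ T := by
          have hIH := IHn l' (by simp only [List.length_cons] at hl; omega) a y
          have hWM := W_le_M q hnn l' a y
          have hWnn := W_nonneg q hnn l' a y
          nlinarith
        have hmax : max (q x a) (q a y) ≤ T := max_le hxa hay
        calc q x y ≤ K * max (q x a) (q a y) := hquasi x a y
          _ ≤ K * T := mul_le_mul_of_nonneg_left hmax (by linarith)

lemma q_le_four_cost (l : List Z) (x y : Z) : q x y ≤ 4 * cost q x l y := by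
  have h := main q K hK1 hK2 hnn hquasi l.length l le_rfl x y
  have h2 := W_le_two_cost q hnn l x y
  have h3 := cost_nonneg q hnn l x y
  have h4 := W_nonneg q hnn l x y
  nlinarith

end main

end QMAux

/-- **Quasi-metrics with constant ≤ 2 are bi-Lipschitz equivalent to metrics.** -/
theorem quasi_metric_biLipschitz_to_metric {Z : Type*} (K : ℝ) (hK1 : 1 ≤ K) (hK2 : K ≤ 2)
    (q : Z → Z → ℝ) (hnonneg : ∀ x y, 0 ≤ q x y)
    (hsymm : ∀ x y, q x y = q y x)
    (hzero : ∀ x y, q x y = 0 ↔ x = y)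
    (hquasi : ∀ x y z, q x z ≤ K * max (q x y) (q y z)) :
    ∃ ρ : Z → Z → ℝ,
      (∀ x y, 0 ≤ ρ x y) ∧
      (∀ x y, ρ x y = ρ y x) ∧
      (∀ x y, ρ x y = 0 ↔ x = y) ∧
      (∀ x y z, ρ x z ≤ ρ x y + ρ y z) ∧
      (∀ x y, (1 / 4) * q x y ≤ ρ x y ∧ ρ x y ≤ q x y) := by
  classical
  set ρ : Z → Z → ℝ := fun x y => sInf (Set.range fun l => QMAux.cost q x l y) with hρ
  have hne : ∀ x y, (Set.range fun l => QMAux.cost q x l y).Nonempty := fun x y =>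
    ⟨QMAux.cost q x [] y, ⟨[], rfl⟩⟩
  have hbdd : ∀ x y, BddBelow (Set.range fun l => QMAux.cost q x l y) := by
    intro x y
    exact ⟨0, by rintro c ⟨l, rfl⟩; exact QMAux.cost_nonneg q hnonneg l x y⟩
  have hnonnegρ : ∀ x y, 0 ≤ ρ x y := by
    intro x y
    apply le_csInf (hne x y)
    rintro c ⟨l, rfl⟩
    exact QMAux.cost_nonneg q hnonneg l x y
  have hupper : ∀ x y, ρ x y ≤ q x y := by
    intro x y
    have : QMAux.cost q x [] y = q x y := rfl
    exact this ▸ csInf_le (hbdd x y) ⟨[], rfl⟩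
  have hlower : ∀ x y, (1 / 4) * q x y ≤ ρ x y := by
    intro x y
    apply le_csInf (hne x y)
    rintro c ⟨l, rfl⟩
    have := QMAux.q_le_four_cost q K hK1 hK2 hnonneg hquasi l x y
    linarith
  have hsymmρ : ∀ x y, ρ x y = ρ y x := by
    intro x y
    have hset : (Set.range fun l => QMAux.cost q x l y)
        = (Set.range fun l => QMAux.cost q y l x) := by
      ext c
      constructor
      · rintro ⟨l, rfl⟩
        exact ⟨l.reverse, (QMAux.cost_reverse q hsymm l x y).symm⟩
      · rintro ⟨l, rfl⟩
        exact ⟨l.reverse, (QMAux.cost_reverse q hsymm l y x).symm⟩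
    simp only [hρ, hset]
  have htri : ∀ x y z, ρ x z ≤ ρ x y + ρ y z := by
    intro x y z
    have key : ∀ l₁ l₂ : List Z, ρ x z ≤ QMAux.cost q x l₁ y + QMAux.cost q y l₂ z := by
      intro l₁ l₂
      have hmem : QMAux.cost q x (l₁ ++ y :: l₂) z ∈ (Set.range fun l => QMAux.cost q x l z) :=
        ⟨l₁ ++ y :: l₂, rfl⟩
      have := csInf_le (hbdd x z) hmem
      rwa [QMAux.cost_concat] at this
    have h1 : ρ x z - ρ y z ≤ ρ x y := by
      apply le_csInf (hne x y)
      rintro c₁ ⟨l₁, rfl⟩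
      have h2 : ρ x z - QMAux.cost q x l₁ y ≤ ρ y z := by
        apply le_csInf (hne y z)
        rintro c₂ ⟨l₂, rfl⟩
        linarith [key l₁ l₂]
      linarith
    linarith
  have hzeroρ : ∀ x y, ρ x y = 0 ↔ x = y := by
    intro x y
    constructor
    · intro h
      have := hlower x y
      rw [h] at this
      have hq0 : q x y = 0 := le_antisymm (by linarith) (hnonneg x y)
      exact (hzero x y).mp hq0
    · rintro rfl
      have h1 := hupper x x
      have h2 := hnonnegρ x x
      have : q x x = 0 := (hzero x x).mpr rfl
      linarith
  exact ⟨ρ, hnonnegρ, hsymmρ, hzeroρ, htri, fun x y => ⟨hlower x y, hupper x y⟩⟩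
end

section
/- Let (X,d) be a complete geodesic metric space and μ a Borel measure on X that is positive and finite on all balls and satisfies the uniform local doubling condition μ(B_{2r}(x)) ≤ 2^N·μ(B_r(x)) for all x ∈ X and all 0 < r < σ, for some constants N > 0 and σ > 0. Then the doubling scale can be enlarged arbitrarily: for every τ > 1 there exists N' > 0, depending only on N and τ, such that μ(B_{2r}(x)) ≤ 2^{N'}·μ(B_r(x)) for all x ∈ X and all 0 < r < τ·σ. -/
/-! In a geodesic space every point of the annulus `ball x (ρ + δ) \ ball x ρ` lies within `2δ`
of the sphere `sphere x (ρ - δ)`. The balls `ball z δ` centred on that sphere lie in `ball x ρ`,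
so the Vitali covering lemma and four doublings at scales below `σ = 16δ` bound the measure of the
annulus by `C⁴ μ(ball x ρ)`. Thus each step `ρ ↦ ρ + σ/16` (for `ρ ≥ σ/16`) costs a factor
`1 + C⁴`, and going from `r < τσ` to `2r` takes at most `⌈16τ⌉` steps. -/

open Metric MeasureTheory

universe u

open scoped ENNReal

theorem Set.PairwiseDisjoint.countable_of_measure_pos {α ι : Type*} [MeasurableSpace α]
    {μ : Measure α} {s : Set ι} {f : ι → Set α} (hd : s.PairwiseDisjoint f)
    (hm : ∀ i ∈ s, MeasurableSet (f i)) (hpos : ∀ i ∈ s, 0 < μ (f i))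
    (hfin : μ (⋃ i ∈ s, f i) ≠ ∞) : s.Countable := by
  have hcount := Measure.countable_meas_pos_of_disjoint_of_meas_iUnion_ne_top μ
    (As := fun i : s ↦ f i) (fun i ↦ hm i i.2)
    (fun i j hij ↦ hd i.2 j.2 (Subtype.coe_ne_coe.mpr hij)) (by rwa [Set.biUnion_eq_iUnion] at hfin)
  have hall : {i : s | 0 < μ (f i)} = Set.univ := Set.eq_univ_of_forall fun i ↦ hpos i i.2
  rw [hall, Set.countable_univ_iff] at hcount
  exact Set.countable_coe_iff.mp hcount

theorem GeodesicSpace.exists_dist_eq {X : Type*} [MetricSpace X] (hX : GeodesicSpace X)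
    (x y : X) {t : ℝ} (ht₀ : 0 ≤ t) (ht : t ≤ dist x y) :
    ∃ z, dist x z = t ∧ dist z y = dist x y - t := by
  obtain ⟨γ, hγx, hγy, hγ⟩ := hX x y
  have ht_mem : t ∈ Set.Icc 0 (dist x y) := ⟨ht₀, ht⟩
  refine ⟨γ t, ?_, ?_⟩
  · rw [← hγx, hγ 0 ⟨le_rfl, dist_nonneg⟩ t ht_mem, zero_sub, abs_neg, abs_of_nonneg ht₀]
  · conv_lhs => rw [← hγy]
    rw [hγ t ht_mem _ ⟨dist_nonneg, le_rfl⟩, abs_sub_comm, abs_of_nonneg (sub_nonneg.mpr ht)]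

theorem GeodesicSpace.ball_add_subset {X : Type*} [MetricSpace X] (hX : GeodesicSpace X)
    (x : X) {ρ δ : ℝ} (hδρ : δ ≤ ρ) :
    ball x (ρ + δ) ⊆ ball x ρ ∪ ⋃ z ∈ sphere x (ρ - δ), closedBall z (2 * δ) := by
  intro y hy
  rw [mem_ball, dist_comm] at hy
  rcases lt_or_ge (dist x y) ρ with hyρ | hyρ
  · exact Or.inl (by rwa [mem_ball, dist_comm])
  · obtain ⟨z, hxz, hzy⟩ := hX.exists_dist_eq x y (sub_nonneg.mpr hδρ) (by linarith)
    refine Or.inr (Set.mem_biUnion (x := z) (by rwa [mem_sphere, dist_comm]) ?_)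
    rw [mem_closedBall, dist_comm]
    linarith

def IsDoublingBelow {X : Type*} [MetricSpace X] [MeasurableSpace X] (μ : Measure X)
    (C : ℝ≥0∞) (σ : ℝ) : Prop :=
  ∀ (x : X) (r : ℝ), 0 < r → r < σ → μ (ball x (2 * r)) ≤ C * μ (ball x r)

namespace IsDoublingBelow

variable {X : Type*} [MetricSpace X] [MeasurableSpace X] {μ : Measure X} {C : ℝ≥0∞} {σ : ℝ}

theorem mono (h : IsDoublingBelow μ C σ) {C' : ℝ≥0∞} {σ' : ℝ} (hC : C ≤ C') (hσ : σ' ≤ σ) :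
    IsDoublingBelow μ C' σ' :=
  fun x r hr hrσ ↦ (h x r hr (hrσ.trans_le hσ)).trans (mul_le_mul_left hC _)

theorem measure_ball_two_pow_mul_le (h : IsDoublingBelow μ C σ) (x : X) {r : ℝ} (hr : 0 < r)
    (n : ℕ) (hn : 2 ^ n * r ≤ σ) : μ (ball x (2 ^ n * r)) ≤ C ^ n * μ (ball x r) := by
  induction n with
  | zero => simp
  | succ n ih =>
    have hlt : 2 ^ n * r < 2 ^ (n + 1) * r := by
      gcongr
      · norm_num
      · omega
    calc μ (ball x (2 ^ (n + 1) * r)) = μ (ball x (2 * (2 ^ n * r))) := by rw [pow_succ']; ring_nf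
      _ ≤ C * μ (ball x (2 ^ n * r)) := h x _ (by positivity) (hlt.trans_le hn)
      _ ≤ C * (C ^ n * μ (ball x r)) := by gcongr; exact ih (hlt.le.trans hn)
      _ = C ^ (n + 1) * μ (ball x r) := by rw [← mul_assoc, pow_succ']

variable [OpensMeasurableSpace X]

/-- By Vitali, a disjoint subfamily of the balls `closedBall z (2δ)` covers their union after
enlargement by `4`; four doublings compare each `ball z (16δ)` with the disjoint `ball z δ`. -/
theorem measure_biUnion_closedBall_le (h : IsDoublingBelow μ C σ)
    (hpos : ∀ (x : X) (r : ℝ), 0 < r → 0 < μ (ball x r)) {S B : Set X} {δ : ℝ} (hδ : 0 < δ)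
    (hδσ : 16 * δ ≤ σ) (hSB : ∀ z ∈ S, ball z δ ⊆ B) (hB : μ B ≠ ∞) :
    μ (⋃ z ∈ S, closedBall z (2 * δ)) ≤ C ^ 4 * μ B := by
  obtain ⟨U, hUS, hUdisj, hUcover⟩ :=
    Vitali.exists_disjoint_subfamily_covering_enlargement_closedBall S id (fun _ ↦ 2 * δ) (2 * δ)
      (fun _ _ ↦ le_rfl) 4 (by norm_num)
  have hUdisj' : U.PairwiseDisjoint fun z ↦ ball z δ := hUdisj.mono fun z ↦
    ball_subset_closedBall.trans (closedBall_subset_closedBall (by linarith))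
  have hUB : (⋃ z ∈ U, ball z δ) ⊆ B := Set.iUnion₂_subset fun z hz ↦ hSB z (hUS hz)
  have hUcount : U.Countable := hUdisj'.countable_of_measure_pos (fun _ _ ↦ measurableSet_ball)
    (fun z _ ↦ hpos z δ hδ) (ne_top_of_le_ne_top hB (measure_mono hUB))
  have hcover : (⋃ z ∈ S, closedBall z (2 * δ)) ⊆ ⋃ z ∈ U, ball z (2 ^ 4 * δ) := by
    refine Set.iUnion₂_subset fun z hz ↦ ?_
    obtain ⟨b, hb, hzb⟩ := hUcover z hz
    exact hzb.trans ((closedBall_subset_ball (show 4 * (2 * δ) < 2 ^ 4 * δ by linarith)).trans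
      (Set.subset_biUnion_of_mem (u := fun z ↦ ball z (2 ^ 4 * δ)) hb))
  calc μ (⋃ z ∈ S, closedBall z (2 * δ))
      ≤ ∑' z : U, μ (ball z (2 ^ 4 * δ)) :=
        (measure_mono hcover).trans (measure_biUnion_le μ hUcount _)
    _ ≤ ∑' z : U, C ^ 4 * μ (ball z δ) := ENNReal.tsum_le_tsum fun z ↦
        h.measure_ball_two_pow_mul_le z hδ 4 (by linarith)
    _ = C ^ 4 * μ (⋃ z ∈ U, ball z δ) := by
        rw [ENNReal.tsum_mul_left, measure_biUnion hUcount hUdisj' fun _ _ ↦ measurableSet_ball]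
    _ ≤ C ^ 4 * μ B := by gcongr

theorem measure_ball_add_le (h : IsDoublingBelow μ C σ) (hX : GeodesicSpace X)
    (hpos : ∀ (x : X) (r : ℝ), 0 < r → 0 < μ (ball x r))
    (hfin : ∀ (x : X) (r : ℝ), 0 < r → μ (ball x r) ≠ ∞) (x : X) {ρ δ : ℝ} (hδ : 0 < δ)
    (hδσ : 16 * δ ≤ σ) (hδρ : δ ≤ ρ) : μ (ball x (ρ + δ)) ≤ (1 + C ^ 4) * μ (ball x ρ) := by
  have hsphere : ∀ z ∈ sphere x (ρ - δ), ball z δ ⊆ ball x ρ := fun z hz ↦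
    ball_subset_ball' (by rw [mem_sphere.mp hz]; linarith)
  calc μ (ball x (ρ + δ))
      ≤ μ (ball x ρ) + μ (⋃ z ∈ sphere x (ρ - δ), closedBall z (2 * δ)) :=
        (measure_mono (hX.ball_add_subset x hδρ)).trans (measure_union_le _ _)
    _ ≤ μ (ball x ρ) + C ^ 4 * μ (ball x ρ) := by
        gcongr
        exact h.measure_biUnion_closedBall_le hpos hδ hδσ hsphere (hfin x ρ (hδ.trans_le hδρ))
    _ = (1 + C ^ 4) * μ (ball x ρ) := by rw [add_mul, one_mul]

theorem measure_ball_add_nat_mul_le (h : IsDoublingBelow μ C σ) (hX : GeodesicSpace X)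
    (hpos : ∀ (x : X) (r : ℝ), 0 < r → 0 < μ (ball x r))
    (hfin : ∀ (x : X) (r : ℝ), 0 < r → μ (ball x r) ≠ ∞) (x : X) {ρ δ : ℝ} (hδ : 0 < δ)
    (hδσ : 16 * δ ≤ σ) (hδρ : δ ≤ ρ) (k : ℕ) :
    μ (ball x (ρ + k * δ)) ≤ (1 + C ^ 4) ^ k * μ (ball x ρ) := by
  induction k with
  | zero => simp
  | succ k ih =>
    have hρk : δ ≤ ρ + k * δ := le_add_of_le_of_nonneg hδρ (by positivity)
    calc μ (ball x (ρ + (k + 1 : ℕ) * δ)) = μ (ball x (ρ + k * δ + δ)) := by push_cast; ring_nf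
      _ ≤ (1 + C ^ 4) * μ (ball x (ρ + k * δ)) := h.measure_ball_add_le hX hpos hfin x hδ hδσ hρk
      _ ≤ (1 + C ^ 4) * ((1 + C ^ 4) ^ k * μ (ball x ρ)) := by gcongr
      _ = (1 + C ^ 4) ^ (k + 1) * μ (ball x ρ) := by rw [← mul_assoc, ← pow_succ']

/-- Above `σ`, go from radius `r` to `2r` in `k` steps of size `σ / 16`. -/
theorem enlarge_scale (h : IsDoublingBelow μ C σ) (hX : GeodesicSpace X)
    (hpos : ∀ (x : X) (r : ℝ), 0 < r → 0 < μ (ball x r))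
    (hfin : ∀ (x : X) (r : ℝ), 0 < r → μ (ball x r) ≠ ∞) (hσ : 0 < σ) (k : ℕ) :
    IsDoublingBelow μ (max C ((1 + C ^ 4) ^ k)) (k * σ / 16) := by
  intro x r hr hrk
  rcases lt_or_ge r σ with hrσ | hσr
  · exact (h x r hr hrσ).trans (mul_le_mul_left (le_max_left _ _) _)
  · calc μ (ball x (2 * r)) ≤ μ (ball x (r + k * (σ / 16))) :=
          measure_mono (ball_subset_ball (by linarith))
      _ ≤ (1 + C ^ 4) ^ k * μ (ball x r) :=
          h.measure_ball_add_nat_mul_le hX hpos hfin x (by linarith) (by linarith) (by linarith) k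
      _ ≤ max C ((1 + C ^ 4) ^ k) * μ (ball x r) := mul_le_mul_left (le_max_right _ _) _

end IsDoublingBelow

theorem one_add_two_rpow_pow_le {N : ℝ} (hN : 0 ≤ N) (k : ℕ) :
    (1 + ((2 : ℝ≥0∞) ^ N) ^ 4) ^ k ≤ (2 : ℝ≥0∞) ^ ((4 * N + 1) * k) := by
  have hone : 1 ≤ (2 : ℝ≥0∞) ^ (4 * N) := by
    simpa using ENNReal.rpow_le_rpow_of_exponent_le one_le_two (by positivity : 0 ≤ 4 * N)
  have hbase : 1 + ((2 : ℝ≥0∞) ^ N) ^ 4 ≤ (2 : ℝ≥0∞) ^ (4 * N + 1) := by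
    rw [← ENNReal.rpow_natCast, ← ENNReal.rpow_mul, ENNReal.rpow_add _ _ two_ne_zero
      ENNReal.ofNat_ne_top, ENNReal.rpow_one, mul_two, mul_comm N]
    push_cast
    gcongr
  calc (1 + ((2 : ℝ≥0∞) ^ N) ^ 4) ^ k ≤ ((2 : ℝ≥0∞) ^ (4 * N + 1)) ^ k := by gcongr
    _ = (2 : ℝ≥0∞) ^ ((4 * N + 1) * k) := by rw [← ENNReal.rpow_natCast, ← ENNReal.rpow_mul]

theorem doubling_scale_enlargement_general (N τ : ℝ) (hN : 0 < N) :
    ∃ N' : ℝ, 0 < N' ∧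
      ∀ (X : Type u) [instM : MetricSpace X] [instMeas : MeasurableSpace X]
        [instB : BorelSpace X],
        CompleteSpace X → GeodesicSpace X →
        ∀ (μ : Measure X) (σ : ℝ), 0 < σ →
          (∀ (x : X) (r : ℝ), 0 < r → 0 < μ (ball x r) ∧ μ (ball x r) < ⊤) →
          (∀ (x : X) (r : ℝ), 0 < r → r < σ →
            μ (ball x (2 * r)) ≤ (2 : ENNReal) ^ N * μ (ball x r)) →
          ∀ (x : X) (r : ℝ), 0 < r → r < τ * σ →
            μ (ball x (2 * r)) ≤ (2 : ENNReal) ^ N' * μ (ball x r) := by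
  set k := ⌈16 * τ⌉₊
  refine ⟨max N ((4 * N + 1) * k), lt_max_of_lt_left hN, ?_⟩
  intro X _ _ _ _ hX μ σ hσ hμ hdoubling
  have hτk : τ * σ ≤ k * σ / 16 := by
    have := Nat.le_ceil (16 * τ)
    nlinarith
  have hC : max ((2 : ℝ≥0∞) ^ N) ((1 + ((2 : ℝ≥0∞) ^ N) ^ 4) ^ k) ≤ 2 ^ max N ((4 * N + 1) * k) :=
    max_le (ENNReal.rpow_le_rpow_of_exponent_le one_le_two (le_max_left _ _))
      ((one_add_two_rpow_pow_le hN.le k).trans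
        (ENNReal.rpow_le_rpow_of_exponent_le one_le_two (le_max_right _ _)))
  exact ((IsDoublingBelow.enlarge_scale hdoubling hX (fun x r hr ↦ (hμ x r hr).1)
    (fun x r hr ↦ (hμ x r hr).2.ne) hσ k).mono hC hτk)

/-- **Enlarging the doubling scale.** Let `X` be a complete geodesic metric space and `μ` a
Borel measure, positive and finite on all balls, satisfying the uniform local doubling
condition `μ(B_{2r}(x)) ≤ 2^N · μ(B_r(x))` for `0 < r < σ`. Then for every `τ > 1` there
is `N' > 0`, depending only on `N` and `τ`, such that
`μ(B_{2r}(x)) ≤ 2^{N'} · μ(B_r(x))` for all `x` and all `0 < r < τ·σ`. -/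
theorem doubling_scale_enlargement (N τ : ℝ) (hN : 0 < N) (hτ : 1 < τ) :
    ∃ N' : ℝ, 0 < N' ∧
      ∀ (X : Type u) [instM : MetricSpace X] [instMeas : MeasurableSpace X]
        [instB : BorelSpace X],
        CompleteSpace X → GeodesicSpace X →
        ∀ (μ : Measure X) (σ : ℝ), 0 < σ →
          (∀ (x : X) (r : ℝ), 0 < r → 0 < μ (ball x r) ∧ μ (ball x r) < ⊤) →
          (∀ (x : X) (r : ℝ), 0 < r → r < σ →
            μ (ball x (2 * r)) ≤ (2 : ENNReal) ^ N * μ (ball x r)) →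
          ∀ (x : X) (r : ℝ), 0 < r → r < τ * σ →
            μ (ball x (2 * r)) ≤ (2 : ENNReal) ^ N' * μ (ball x r) :=
  doubling_scale_enlargement_general N τ hN
end

section
/- Let (X,d) be a geodesic metric space, let U ⊆ X be an open set with X∖U nonempty, and let δ > 0 be such that the open set U_{−δ} := {x ∈ U : dist(x, X∖U) > δ} is nonempty. Then U_{−δ} has an exterior corkscrew: for every boundary point ξ ∈ ∂U_{−δ} and every radius 0 < r ≤ δ there exists a point y ∈ X with d(ξ, y) ≤ r and B_{r/2}(y) ∩ U_{−δ} = ∅. -/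
/-- **Exterior corkscrew for inner sets.** In a geodesic metric space `X`, let `U ⊆ X` be
open with nonempty complement and let `δ > 0` be such that
`U_{−δ} = {x ∈ U : dist(x, X∖U) > δ}` is nonempty. Then for every `ξ ∈ ∂U_{−δ}` and every
`0 < r ≤ δ` there is a point `y` with `d(ξ, y) ≤ r` and `B_{r/2}(y) ∩ U_{−δ} = ∅`. -/
theorem exterior_corkscrew {X : Type*} [MetricSpace X] (hgeo : GeodesicSpace X)
    (U : Set X) (hU : IsOpen U) (hcompl : Uᶜ.Nonempty) (δ : ℝ) (hδ : 0 < δ)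
    (hne : {x | x ∈ U ∧ δ < Metric.infDist x Uᶜ}.Nonempty) :
    ∀ ξ ∈ frontier {x | x ∈ U ∧ δ < Metric.infDist x Uᶜ},
      ∀ r : ℝ, 0 < r → r ≤ δ →
        ∃ y : X, dist ξ y ≤ r ∧
          Metric.ball y (r / 2) ∩ {x | x ∈ U ∧ δ < Metric.infDist x Uᶜ} = ∅ := by
  intro ξ hξ r hr hrδ
  set S : Set X := {x | x ∈ U ∧ δ < Metric.infDist x Uᶜ} with hS
  have hSopen : IsOpen S := by
    have : S = U ∩ {x | δ < Metric.infDist x Uᶜ} := by ext x; simp [hS, Set.mem_setOf_eq]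
    rw [this]
    exact hU.inter (isOpen_lt continuous_const (Metric.continuous_infDist_pt _))
  -- ξ is in the closure of S but not in S
  have hξcl : ξ ∈ closure S := hξ.1
  have hξnot : ξ ∉ S := fun h => hξ.2 (by rwa [hSopen.interior_eq])
  -- infDist ξ Uᶜ ≥ δ
  have hge : δ ≤ Metric.infDist ξ Uᶜ := by
    have hsub : S ⊆ {x | δ ≤ Metric.infDist x Uᶜ} := fun x hx => le_of_lt hx.2
    have hclosed : IsClosed {x | δ ≤ Metric.infDist x Uᶜ} :=
      isClosed_le continuous_const (Metric.continuous_infDist_pt _)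
    exact (closure_minimal hsub hclosed) hξcl
  -- hence ξ ∈ U and infDist ξ Uᶜ ≤ δ
  have hξU : ξ ∈ U := by
    by_contra h
    have : Metric.infDist ξ Uᶜ = 0 := Metric.infDist_zero_of_mem h
    linarith
  have hle : Metric.infDist ξ Uᶜ ≤ δ := by
    by_contra h
    exact hξnot ⟨hξU, lt_of_not_ge h⟩
  have heq : Metric.infDist ξ Uᶜ = δ := le_antisymm hle hge
  -- choose z ∈ Uᶜ with dist ξ z < δ + r/2
  obtain ⟨z, hz, hzd⟩ : ∃ z ∈ Uᶜ, dist ξ z < δ + r / 2 := by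
    have : Metric.infDist ξ Uᶜ < δ + r / 2 := by rw [heq]; linarith
    exact (Metric.infDist_lt_iff hcompl).mp this
  have hdz : δ ≤ dist ξ z := heq ▸ Metric.infDist_le_dist_of_mem hz
  obtain ⟨γ, hγ0, hγ1, hγ⟩ := hgeo ξ z
  refine ⟨γ r, ?_, ?_⟩
  · have h1 : dist (γ 0) (γ r) = |0 - r| := by
      apply hγ 0 ⟨le_refl 0, dist_nonneg⟩ r ⟨hr.le, le_trans hrδ hdz⟩
    rw [hγ0] at h1
    rw [h1]
    rw [abs_of_nonpos (by linarith)]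
    linarith
  · ext p
    simp only [Set.mem_inter_iff, Set.mem_empty_iff_false, iff_false, not_and]
    intro hp hpS
    have hyz : dist (γ r) (γ (dist ξ z)) = |r - dist ξ z| :=
      hγ r ⟨hr.le, le_trans hrδ hdz⟩ (dist ξ z) ⟨dist_nonneg, le_refl _⟩
    rw [hγ1, abs_of_nonpos (by linarith)] at hyz
    have hpz : dist p z ≤ dist p (γ r) + dist (γ r) z := dist_triangle _ _ _
    have hpy : dist p (γ r) < r / 2 := Metric.mem_ball.mp hp
    have : Metric.infDist p Uᶜ ≤ dist p z := Metric.infDist_le_dist_of_mem hz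
    have : Metric.infDist p Uᶜ < δ := by
      calc Metric.infDist p Uᶜ ≤ dist p z := this
        _ ≤ dist p (γ r) + dist (γ r) z := hpz
        _ < r / 2 + (-(r - dist ξ z)) := by linarith [hyz ▸ le_refl (dist (γ r) z)]
        _ < δ := by linarith
    linarith [hpS.2]
end

section
/- In the hyperbolic plane, realized as the upper half-plane ℍ = {z ∈ ℂ : Im z > 0} with the hyperbolic distance dist(z,w) = arcosh(1 + |z−w|²/(2·Im z·Im w)), every geodesic triangle is ln 3-thin: for any geodesic triangle in ℍ, every point on any one of its three sides lies within hyperbolic distance ln 3 of the union of the other two sides. -/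
/-!
Move the vertex to `I` by an isometry. Every point of `ℍ` lies at time `dist I z` on a unit-speed
geodesic `geodesicFromI ω` leaving `I` with velocity `ω`, and along two of them the law of cosines
reads `cosh d(γ_ω y, γ_η x) = cosh y cosh x - ⟪ω, η⟫ sinh y sinh x`. Equality in the
triangle inequality forces `⟪ω, η⟫ = 1`, so points `p`, `q` of two sides at the same distance `s`
from the vertex sit at time `s` on the geodesics towards the other two vertices. When `s` is at
most the Gromov product at that vertex, the law of cosines and `sinh (s + u) ≥ sinh s · eᵘ` give
`cosh d(p, q) ≤ 3/2 < 5/3 = cosh (ln 3)`. Every point of a side is, for one of the two endpoints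
of that side, within the Gromov product at that endpoint.
-/

open Real

namespace IsGeodesicSegment

variable {X : Type*} [MetricSpace X] {γ : ℝ → X} {x y : X} {t : ℝ}

lemma dist_left_apply (h : IsGeodesicSegment γ x y) (ht : t ∈ Set.Icc 0 (dist x y)) :
    dist x (γ t) = t := by
  obtain ⟨h0, -, hγ⟩ := h
  rw [← h0, hγ 0 ⟨le_rfl, dist_nonneg⟩ t ht, zero_sub, abs_neg, abs_of_nonneg ht.1]

lemma dist_apply_right (h : IsGeodesicSegment γ x y) (ht : t ∈ Set.Icc 0 (dist x y)) :
    dist (γ t) y = dist x y - t := by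
  obtain ⟨-, h1, hγ⟩ := h
  calc dist (γ t) y = dist (γ t) (γ (dist x y)) := by rw [h1]
    _ = dist x y - t := by
      rw [hγ t ht _ ⟨dist_nonneg, le_rfl⟩, abs_of_nonpos (sub_nonpos.2 ht.2), neg_sub]

end IsGeodesicSegment

namespace Real

lemma cosh_sub_mul_sinh_pos {k : ℝ} (hk : k ^ 2 ≤ 1) (x : ℝ) : 0 < cosh x - k * sinh x := by
  nlinarith [cosh_sq x, cosh_pos x, sq_nonneg (sinh x - k * cosh x),
    sq_nonneg (sinh x + k * cosh x), sq_nonneg (sinh x)]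

lemma sinh_mul_exp_le_sinh_add (s : ℝ) {u : ℝ} (hu : 0 ≤ u) :
    sinh s * exp u ≤ sinh (s + u) := by
  have h : sinh (s + u) - sinh s * exp u = sinh u * exp (-s) := by
    rw [sinh_add, ← cosh_add_sinh u, ← cosh_sub_sinh]
    ring
  nlinarith [mul_nonneg (sinh_nonneg_iff.2 hu) (exp_pos (-s)).le]

lemma sinh_le_exp_div_two (u : ℝ) : sinh u ≤ exp u / 2 := by
  rw [sinh_eq]
  linarith [exp_pos (-u)]

/-- By the law of cosines, `h` says that in a triangle with sides `s + u` and `s + v` at an angle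
of cosine `κ` the third side is at most `u + v`; the conclusion bounds `cosh` of the distance
between the points at distance `s` from the vertex. -/
lemma cosh_mul_cosh_sub_mul_sinh_mul_sinh_le_three_halves {κ s u v : ℝ} (hs : 0 ≤ s)
    (hu : 0 ≤ u) (hv : 0 ≤ v)
    (h : cosh (s + u) * cosh (s + v) - κ * (sinh (s + u) * sinh (s + v)) ≤ cosh (u + v)) :
    cosh s * cosh s - κ * (sinh s * sinh s) ≤ 3 / 2 := by
  have hlegs : cosh (s + u) * cosh (s + v) = cosh (u - v) + sinh (s + u) * sinh (s + v) := by
    rw [← add_sub_add_left_eq_sub u v s, cosh_sub]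
    ring
  have hbase : cosh (u + v) = cosh (u - v) + 2 * (sinh u * sinh v) := by
    rw [cosh_add, cosh_sub]
    ring
  have hdefect : (1 - κ) * (sinh (s + u) * sinh (s + v)) ≤ exp u * exp v / 2 := by
    have := mul_le_mul (sinh_le_exp_div_two u) (sinh_le_exp_div_two v)
      (sinh_nonneg_iff.2 hv) (by positivity)
    linarith
  have hlow : sinh s * sinh s * (exp u * exp v) ≤ sinh (s + u) * sinh (s + v) := by
    have hsu := sinh_mul_exp_le_sinh_add s hu
    have hsv := sinh_mul_exp_le_sinh_add s hv
    have hs' : 0 ≤ sinh s := sinh_nonneg_iff.2 hs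
    rw [mul_mul_mul_comm]
    exact mul_le_mul hsu hsv (by positivity) ((by positivity : 0 ≤ sinh s * exp u).trans hsu)
  have hsinh : (1 - κ) * (sinh s * sinh s) ≤ 1 / 2 := by
    rcases le_or_gt κ 1 with hκ | hκ
    · refine le_of_mul_le_mul_right ?_ (by positivity : 0 < exp u * exp v)
      nlinarith [mul_le_mul_of_nonneg_left hlow (sub_nonneg.2 hκ)]
    · nlinarith [mul_self_nonneg (sinh s)]
  nlinarith [cosh_sq s]

end Real

lemma Circle.re_sq_add_im_sq (ω : Circle) : (ω : ℂ).re ^ 2 + (ω : ℂ).im ^ 2 = 1 := by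
  simpa [Complex.normSq_apply, sq] using Circle.normSq_coe ω

namespace UpperHalfPlane

open scoped UpperHalfPlane

/-- The unit-speed geodesic with velocity `ω` at `I` (at time `0`): the image of `t ↦ i eᵗ` under
the rotation about `I` that turns the upward direction into `ω`. -/
noncomputable def geodesicFromI (ω : Circle) (x : ℝ) : ℍ :=
  mk ⟨(ω : ℂ).re * sinh x / (cosh x - (ω : ℂ).im * sinh x),
      1 / (cosh x - (ω : ℂ).im * sinh x)⟩
    (one_div_pos.2 <| cosh_sub_mul_sinh_pos (by nlinarith [ω.re_sq_add_im_sq]) x)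

@[simp] lemma geodesicFromI_re (ω : Circle) (x : ℝ) :
    (geodesicFromI ω x).re = (ω : ℂ).re * sinh x / (cosh x - (ω : ℂ).im * sinh x) := rfl

@[simp] lemma geodesicFromI_im (ω : Circle) (x : ℝ) :
    (geodesicFromI ω x).im = 1 / (cosh x - (ω : ℂ).im * sinh x) := rfl

@[simp] lemma geodesicFromI_zero (ω : Circle) : geodesicFromI ω 0 = I :=
  ext_re_im (by simp [I_re]) (by simp [I_im])

lemma cosh_dist_geodesicFromI (ω η : Circle) (y x : ℝ) :
    cosh (dist (geodesicFromI ω y) (geodesicFromI η x)) =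
      cosh y * cosh x - inner ℝ (ω : ℂ) (η : ℂ) * (sinh y * sinh x) := by
  have hy := cosh_sub_mul_sinh_pos (k := (ω : ℂ).im) (by nlinarith [ω.re_sq_add_im_sq]) y
  have hx := cosh_sub_mul_sinh_pos (k := (η : ℂ).im) (by nlinarith [η.re_sq_add_im_sq]) x
  rw [cosh_dist', Complex.inner, geodesicFromI_re, geodesicFromI_re, geodesicFromI_im,
    geodesicFromI_im]
  simp only [Complex.mul_re, Complex.conj_re, Complex.conj_im]
  set dy := cosh y - (ω : ℂ).im * sinh y
  set dx := cosh x - (η : ℂ).im * sinh x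
  rw [div_eq_iff (by positivity)]
  field_simp
  linear_combination sinh y ^ 2 * dx ^ 2 * ω.re_sq_add_im_sq
    + sinh x ^ 2 * dy ^ 2 * η.re_sq_add_im_sq - dx ^ 2 * cosh_sq y - dy ^ 2 * cosh_sq x

lemma exists_geodesicFromI_eq (z : ℍ) : ∃ ω : Circle, geodesicFromI ω (dist I z) = z := by
  rcases eq_or_ne z I with rfl | hz
  · exact ⟨1, by rw [dist_self, geodesicFromI_zero]⟩
  have hv := z.im_pos
  have hS : 0 < sinh (dist I z) := sinh_pos_iff.2 (dist_pos.2 hz.symm)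
  have hC : cosh (dist I z) * (2 * z.im) = z.re ^ 2 + z.im ^ 2 + 1 := by
    rw [cosh_dist', I_re, I_im]
    field_simp
    ring
  have hCS := cosh_sq (dist I z)
  set S := sinh (dist I z)
  set C := cosh (dist I z)
  -- the velocity at `I` of the geodesic towards `z` is proportional to `2 Re z + i (|z|² - 1)`
  let ω : Circle := ⟨⟨z.re / (z.im * S), (z.re ^ 2 + z.im ^ 2 - 1) / (2 * z.im * S)⟩, by
    refine mem_sphere_zero_iff_norm.2
      ((pow_left_inj₀ (norm_nonneg _) zero_le_one two_ne_zero).1 ?_)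
    rw [← Complex.normSq_eq_norm_sq, Complex.normSq_mk]
    field_simp
    nlinarith⟩
  have hden : C - (ω : ℂ).im * S = 1 / z.im := by
    change C - (z.re ^ 2 + z.im ^ 2 - 1) / (2 * z.im * S) * S = 1 / z.im
    field_simp
    linarith
  refine ⟨ω, ext_re_im ?_ ?_⟩
  · rw [geodesicFromI_re, hden]
    change z.re / (z.im * S) * S / (1 / z.im) = z.re
    field_simp
  · rw [geodesicFromI_im, hden, one_div_one_div]

lemma eq_geodesicFromI_of_dist_add_dist_eq {ω : Circle} {y z : ℍ}
    (hy : geodesicFromI ω (dist I y) = y) (hz : dist I z + dist z y = dist I y) :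
    z = geodesicFromI ω (dist I z) := by
  obtain ⟨η, hη⟩ := exists_geodesicFromI_eq z
  have hs0 : 0 ≤ dist I z := dist_nonneg
  generalize dist I y = x at hy hz
  generalize dist I z = s at *
  subst hy hη
  rcases hs0.eq_or_lt with hs | hs
  · simp only [← hs, geodesicFromI_zero]
  have hx : 0 < x := by linarith [dist_nonneg (x := geodesicFromI η s) (y := geodesicFromI ω x)]
  have hcosh := congrArg cosh (eq_sub_of_add_eq' hz)
  rw [cosh_dist_geodesicFromI, cosh_sub] at hcosh
  have hinner : inner ℝ (η : ℂ) ω = 1 := by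
    have := mul_pos (sinh_pos_iff.2 hs) (sinh_pos_iff.2 hx)
    nlinarith
  rw [inner_eq_one_iff_of_norm_eq_one η.norm_coe ω.norm_coe, Circle.coe_inj] at hinner
  rw [hinner]

lemma exists_isometry_apply_eq_I (a : ℍ) : ∃ f : ℍ → ℍ, Isometry f ∧ f a = I :=
  ⟨fun z ↦ (⟨a.im⁻¹, inv_pos.2 a.im_pos⟩ : {x : ℝ // 0 < x}) • (-a.re +ᵥ z),
    (isometry_pos_mul _).comp (isometry_real_vadd _),
    ext_re_im (by simp [pos_real_re, vadd_re, I_re])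
      (by simp [pos_real_im, vadd_im, I_im, a.im_ne_zero])⟩

lemma cosh_dist_geodesicFromI_le_three_halves {ω η : Circle} {s u v : ℝ} (hs : 0 ≤ s)
    (hu : 0 ≤ u) (hv : 0 ≤ v)
    (h : dist (geodesicFromI ω (s + u)) (geodesicFromI η (s + v)) ≤ u + v) :
    cosh (dist (geodesicFromI ω s) (geodesicFromI η s)) ≤ 3 / 2 := by
  have hcosh : cosh (dist (geodesicFromI ω (s + u)) (geodesicFromI η (s + v))) ≤ cosh (u + v) :=
    cosh_le_cosh.2 (by rwa [abs_of_nonneg dist_nonneg, abs_of_nonneg (add_nonneg hu hv)])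
  rw [cosh_dist_geodesicFromI] at hcosh ⊢
  exact cosh_mul_cosh_sub_mul_sinh_mul_sinh_le_three_halves hs hu hv hcosh

lemma dist_le_log_three_of_dist_le_at_I {b c p q : ℍ} (hp : dist I p + dist p b = dist I b)
    (hq : dist I q + dist q c = dist I c) (hpq : dist I p = dist I q)
    (hbc : dist b c ≤ dist p b + dist q c) : dist p q ≤ log 3 := by
  obtain ⟨ω, hb⟩ := exists_geodesicFromI_eq b
  obtain ⟨η, hc⟩ := exists_geodesicFromI_eq c
  have hp' := eq_geodesicFromI_of_dist_add_dist_eq hb hp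
  have hq' := eq_geodesicFromI_of_dist_add_dist_eq hc hq
  rw [← hp] at hb
  rw [← hq, ← hpq] at hc
  have h := cosh_dist_geodesicFromI_le_three_halves (ω := ω) (η := η) (u := dist p b)
    (v := dist q c) dist_nonneg dist_nonneg dist_nonneg (by rwa [hb, hc])
  rw [← hp', hpq, ← hq'] at h
  have hlog : cosh (dist p q) ≤ cosh (log 3) := by
    rw [cosh_log (by norm_num : (0 : ℝ) < 3)]
    linarith
  rwa [cosh_le_cosh, abs_of_nonneg dist_nonneg, abs_of_nonneg (log_nonneg (by norm_num))] at hlog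

theorem dist_le_log_three_of_dist_le {a b c p q : ℍ} (hp : dist a p + dist p b = dist a b)
    (hq : dist a q + dist q c = dist a c) (hpq : dist a p = dist a q)
    (hbc : dist b c ≤ dist p b + dist q c) : dist p q ≤ log 3 := by
  obtain ⟨f, hf, hfa⟩ := exists_isometry_apply_eq_I a
  rw [← hf.dist_eq]
  refine dist_le_log_three_of_dist_le_at_I (b := f b) (c := f c) ?_ ?_ ?_ ?_ <;>
    simpa only [← hfa, hf.dist_eq]

theorem infDist_le_log_three {a b c : ℍ} {γab γbc γca : ℝ → ℍ}
    (hab : IsGeodesicSegment γab a b) (hbc : IsGeodesicSegment γbc b c)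
    (hca : IsGeodesicSegment γca c a) {s : ℝ} (hs : s ∈ Set.Icc 0 (dist a b)) :
    Metric.infDist (γab s) (γbc '' Set.Icc 0 (dist b c) ∪ γca '' Set.Icc 0 (dist c a)) ≤
      log 3 := by
  have hap := hab.dist_left_apply hs
  have hpb := hab.dist_apply_right hs
  have htri := dist_triangle a c b
  rcases le_total (2 * s) (dist a b + dist a c - dist b c) with h | h
  · have ht : dist c a - s ∈ Set.Icc 0 (dist c a) := by
      constructor <;> linarith [hs.1, dist_comm a c, dist_comm b c]
    have hcq := hca.dist_left_apply ht
    have hqa := hca.dist_apply_right ht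
    refine (Metric.infDist_le_dist_of_mem
      (Set.mem_union_right _ (Set.mem_image_of_mem γca ht))).trans
      (dist_le_log_three_of_dist_le (a := a) (b := b) (c := c) ?_ ?_ ?_ ?_) <;>
      linarith [dist_comm a c, dist_comm a (γca (dist c a - s)), dist_comm c (γca (dist c a - s))]
  · have ht : dist a b - s ∈ Set.Icc 0 (dist b c) := by
      constructor <;> linarith [hs.2, dist_comm b c]
    have hbq := hbc.dist_left_apply ht
    have hqc := hbc.dist_apply_right ht
    refine (Metric.infDist_le_dist_of_mem
      (Set.mem_union_left _ (Set.mem_image_of_mem γbc ht))).trans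
      (dist_le_log_three_of_dist_le (a := b) (b := a) (c := c) ?_ ?_ ?_ ?_) <;>
      linarith [dist_comm a b, dist_comm a (γab s), dist_comm b (γab s)]

end UpperHalfPlane

/-- **The hyperbolic plane is `ln 3`-thin.** In the upper half-plane
`ℍ = {z ∈ ℂ : Im z > 0}` with the hyperbolic distance — characterized by
`cosh (dist z w) = 1 + |z − w|² / (2 · Im z · Im w)` — every geodesic triangle is
`ln 3`-thin. -/
theorem hyperbolic_plane_thin_triangles :
    (∀ z w : UpperHalfPlane, Real.cosh (dist z w) =
      1 + ‖(z : ℂ) - (w : ℂ)‖ ^ 2 / (2 * z.im * w.im)) ∧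
    ThinTriangles UpperHalfPlane (Real.log 3) := by
  refine ⟨fun z w ↦ by rw [UpperHalfPlane.cosh_dist, Complex.dist_eq], ?_⟩
  intro a b c γab γbc γca hab hbc hca
  refine ⟨fun s ↦ UpperHalfPlane.infDist_le_log_three hab hbc hca, fun s hs ↦ ?_,
    fun s ↦ UpperHalfPlane.infDist_le_log_three hca hab hbc⟩
  rw [Set.union_comm]
  exact UpperHalfPlane.infDist_le_log_three hbc hca hab hs
end

section
/- In the hyperbolic upper half-plane ℍ = {z ∈ ℂ : Im z > 0} with hyperbolic distance dist(z,w) = arcosh(1 + |z−w|²/(2·Im z·Im w)), there exist constants α > 0 and β > 0 such that for every positive integer k the open sets U_i := {z ∈ ℍ : |z| < 2^{-i}} (where |z| is the Euclidean modulus), i = 1, …, k, together with the track points x_i := 2^{-i}·i on the imaginary axis, form a Φ-chain with respect to the hyperbolic metric for the linear function Φ(t) = α·t + β, where the boundaries ∂U_i are taken inside ℍ. -/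
/-!
Since `ℍ` is open in `ℂ`, the frontier of `U_i` in `ℍ` is the semicircle `|x| = r = 2^{-i}`.
On it the distance to the track point `r i` is given by
`cosh d(x, r i) = r / Im x`, while for `|y| ∈ {r/2, 2r}` the bound `|x - y| ≥ ||x| - |y||`
gives `cosh d(x, y) ≥ 1 + r / (4 Im x) = 1 + cosh d(x, r i) / 4`. Hence both
`d(x, y) ≥ log 2` and `d(x, y) ≥ d(x, r i) - 3 log 2`, and the average of these with
weights `7/8, 1/8` is `Φ(d(x, r i))` for `Φ(t) = t/8 + (log 2)/2`. Consecutive track points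
are at distance `log 2 ∈ [Φ 0, 3 Φ 0]`.
-/

open Real
open scoped UpperHalfPlane

lemma Real.log_two_le_of_five_div_four_le_cosh {b : ℝ} (hb : 0 ≤ b) (h : 5 / 4 ≤ cosh b) :
    log 2 ≤ b := by
  have hcosh : cosh (log 2) = 5 / 4 := by rw [cosh_log two_pos]; norm_num
  rw [← hcosh, cosh_le_cosh, abs_of_pos (log_pos one_lt_two), abs_of_nonneg hb] at h
  exact h

lemma Real.linear_le_of_one_add_cosh_div_four_le_cosh {a b : ℝ} (hb : 0 ≤ b)
    (h : 1 + cosh a / 4 ≤ cosh b) : 1 / 8 * a + log 2 / 2 ≤ b := by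
  have hlog : log 2 ≤ b :=
    log_two_le_of_five_div_four_le_cosh hb (by linarith [one_le_cosh a])
  -- `exp a ≤ 2 cosh a ≤ 8 (cosh b - 1) < 8 exp b`
  have hexp : exp a < exp (b + 3 * log 2) := by
    have ha : exp a ≤ 2 * cosh a := by rw [cosh_eq]; linarith [exp_pos (-a)]
    have hb' : cosh b ≤ exp b := by
      rw [cosh_eq]; linarith [exp_le_exp.2 (show -b ≤ b by linarith)]
    have h8 : exp (3 * log 2) = 8 := by
      rw [← log_rpow two_pos, exp_log (by positivity)]; norm_num
    rw [exp_add, h8]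
    linarith
  linarith [exp_lt_exp.1 hexp]

namespace UpperHalfPlane

lemma isOpen_setOf_norm_lt (r : ℝ) : IsOpen {z : ℍ | ‖(z : ℂ)‖ < r} :=
  isOpen_lt (continuous_norm.comp continuous_coe) continuous_const

lemma frontier_setOf_norm_lt {r : ℝ} (hr : r ≠ 0) :
    frontier {z : ℍ | ‖(z : ℂ)‖ < r} = {z : ℍ | ‖(z : ℂ)‖ = r} := by
  have hball : {z : ℍ | ‖(z : ℂ)‖ < r} = (↑) ⁻¹' Metric.ball (0 : ℂ) r := by ext; simp
  rw [hball, ← isOpenEmbedding_coe.isOpenMap.preimage_frontier_eq_frontier_preimage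
    continuous_coe, frontier_ball 0 hr]
  ext; simp

lemma norm_coe_eq_of_coe_eq_ofReal_mul_I {p : ℍ} {r : ℝ} (hp : (p : ℂ) = r * Complex.I) :
    ‖(p : ℂ)‖ = r := by
  have hr : 0 < r := by simpa [hp] using p.coe_im_pos
  rw [hp, norm_mul, Complex.norm_I, Complex.norm_real, norm_of_nonneg hr.le, mul_one]

lemma dist_eq_log_two_of_coe_eq_ofReal_mul_I {p q : ℍ} {r : ℝ} (hr : 0 < r)
    (hp : (p : ℂ) = r * Complex.I) (hq : (q : ℂ) = ((r / 2 : ℝ) : ℂ) * Complex.I) :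
    dist p q = log 2 := by
  have hre : p.re = q.re := by simp [← coe_re, hp, hq]
  have hpim : p.im = r := by simp [← coe_im, hp]
  have hqim : q.im = r / 2 := by simp [← coe_im, hq]
  rw [dist_of_re_eq hre, hpim, hqim, Real.dist_eq, ← log_div hr.ne' (by positivity),
    div_div_cancel₀ hr.ne', abs_of_pos (log_pos one_lt_two)]

lemma cosh_dist_of_coe_eq_ofReal_mul_I {x p : ℍ} {r : ℝ} (hx : ‖(x : ℂ)‖ = r)
    (hp : (p : ℂ) = r * Complex.I) : cosh (dist x p) = r / x.im := by
  have hr : r ≠ 0 := by rw [← hx]; exact norm_ne_zero_iff.2 x.ne_zero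
  have hpim : p.im = r := by simp [← coe_im, hp]
  have hnorm : x.re ^ 2 + x.im ^ 2 = r ^ 2 := by
    rw [← hx, Complex.sq_norm, Complex.normSq_apply, coe_re, coe_im]; ring
  have hsq : dist (x : ℂ) p ^ 2 = 2 * r ^ 2 - 2 * r * x.im := by
    rw [Complex.dist_eq, Complex.sq_norm, hp, Complex.normSq_apply]
    simp only [Complex.sub_re, Complex.sub_im, Complex.mul_re, Complex.mul_im, coe_re, coe_im,
      Complex.ofReal_re, Complex.ofReal_im, Complex.I_re, Complex.I_im]
    nlinarith
  rw [cosh_dist, hpim, hsq]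
  field_simp
  ring

lemma one_add_sq_norm_sub_norm_div_le_cosh_dist (x y : ℍ) :
    1 + (‖(x : ℂ)‖ - ‖(y : ℂ)‖) ^ 2 / (2 * x.im * y.im) ≤ cosh (dist x y) := by
  rw [cosh_dist, Complex.dist_eq, ← sq_abs (‖(x : ℂ)‖ - _)]
  gcongr
  exact abs_norm_sub_norm_le _ _

lemma one_add_div_four_le_cosh_dist {x y : ℍ} {r : ℝ} (hr : 0 < r) (hx : ‖(x : ℂ)‖ = r)
    (hy : ‖(y : ℂ)‖ = r / 2 ∨ ‖(y : ℂ)‖ = 2 * r) : 1 + r / (4 * x.im) ≤ cosh (dist x y) := by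
  refine le_trans ?_ (one_add_sq_norm_sub_norm_div_le_cosh_dist x y)
  have hyim : y.im ≤ ‖(y : ℂ)‖ := (coe_im y).symm.trans_le (Complex.im_le_norm _)
  have hxim := x.im_pos
  have hyim_pos := y.im_pos
  rw [add_le_add_iff_left, div_le_div_iff₀ (by positivity) (by positivity), hx]
  have hxr : 0 ≤ r * x.im := by positivity
  rcases hy with hy | hy <;> rw [hy] at hyim ⊢ <;> nlinarith [mul_le_mul_of_nonneg_left hyim hxr]

lemma linear_le_dist_of_norm_eq {x y p : ℍ} {r : ℝ} (hr : 0 < r) (hx : ‖(x : ℂ)‖ = r)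
    (hy : ‖(y : ℂ)‖ = r / 2 ∨ ‖(y : ℂ)‖ = 2 * r) (hp : (p : ℂ) = r * Complex.I) :
    1 / 8 * dist x p + log 2 / 2 ≤ dist x y := by
  refine linear_le_of_one_add_cosh_div_four_le_cosh dist_nonneg ?_
  rw [cosh_dist_of_coe_eq_ofReal_mul_I hx hp, div_div, mul_comm]
  exact one_add_div_four_le_cosh_dist hr hx hy

lemma linear_le_infDist_frontier {x p : ℍ} {r s : ℝ} (hr : 0 < r) (hx : ‖(x : ℂ)‖ = r)
    (hs : s = r / 2 ∨ s = 2 * r) (hp : (p : ℂ) = r * Complex.I) :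
    1 / 8 * dist x p + log 2 / 2 ≤ Metric.infDist x (frontier {z : ℍ | ‖(z : ℂ)‖ < s}) := by
  have hs0 : 0 < s := by rcases hs with rfl | rfl <;> positivity
  rw [frontier_setOf_norm_lt hs0.ne', Metric.le_infDist
    ⟨mk (s * Complex.I) (by simpa), norm_coe_eq_of_coe_eq_ofReal_mul_I (coe_mk _ _)⟩]
  rintro y (hy : ‖(y : ℂ)‖ = s)
  exact linear_le_dist_of_norm_eq hr hx (hy ▸ hs) hp

end UpperHalfPlane

open UpperHalfPlane

lemma two_zpow_neg_natCast_succ (i : ℕ) :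
    (2 : ℝ) ^ (-((i + 1 : ℕ) : ℤ)) = 2 ^ (-(i : ℤ)) / 2 := by
  rw [Nat.cast_succ, neg_add, zpow_add₀ two_ne_zero, zpow_neg_one, div_eq_mul_inv]

/-- **A Φ-chain in the hyperbolic upper half-plane.** There are constants `α, β > 0` such
that for every positive integer `k`, the sets `U_i = {z ∈ ℍ : |z| < 2^{-i}}` (Euclidean
modulus) with track points `x_i = 2^{-i}·i` on the imaginary axis, `i = 1, …, k`, form a
`Φ`-chain for `Φ(t) = α·t + β` with respect to the hyperbolic metric of `ℍ`, where the
boundaries `∂U_i` are taken inside `ℍ`. -/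
theorem phi_chain_in_upper_half_plane :
    ∃ α β : ℝ, 0 < α ∧ 0 < β ∧
      ∀ k : ℕ, 0 < k →
        IsPhiChainOn (fun t => α * t + β)
          (fun i => {z : UpperHalfPlane | ‖(z : ℂ)‖ < (2 : ℝ) ^ (-(i : ℤ))})
          (fun i => (⟨((2 : ℝ) ^ (-(i : ℤ)) : ℝ) * Complex.I, by
            rw [Complex.mul_I_im, Complex.ofReal_re]
            exact zpow_pos (by norm_num : (0:ℝ) < 2) (-(i : ℤ))⟩ :
            UpperHalfPlane))
          1 k := by
  refine ⟨1 / 8, log 2 / 2, by norm_num, by positivity, fun k _ => ?_⟩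
  have hpos (i : ℕ) : 0 < (2 : ℝ) ^ (-(i : ℤ)) := zpow_pos two_pos _
  refine ⟨fun i _ _ => isOpen_setOf_norm_lt _, ?_, ?_, ?_, ?_, ?_⟩
  · intro i _ _ z (hz : ‖(z : ℂ)‖ < _)
    exact hz.trans_le (by rw [two_zpow_neg_natCast_succ]; linarith [hpos i])
  · intro i _ _
    rw [frontier_setOf_norm_lt (hpos i).ne']
    exact norm_coe_eq_of_coe_eq_ofReal_mul_I rfl
  · intro i _ _
    rw [dist_eq_log_two_of_coe_eq_ofReal_mul_I (hpos i) rfl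
      (congrArg (fun t : ℝ => (t : ℂ) * Complex.I) (two_zpow_neg_natCast_succ i))]
    constructor <;> linarith [log_pos one_lt_two]
  · intro i _ _ x hx
    rw [frontier_setOf_norm_lt (hpos i).ne'] at hx
    exact linear_le_infDist_frontier (hpos i) hx (.inl (two_zpow_neg_natCast_succ i)) rfl
  · intro i hi _ x hx
    obtain ⟨j, rfl⟩ : ∃ j, i = j + 1 := ⟨i - 1, by omega⟩
    rw [frontier_setOf_norm_lt (hpos _).ne'] at hx
    simp only [Nat.add_sub_cancel]
    refine linear_le_infDist_frontier (hpos _) hx (.inr ?_) rfl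
    rw [two_zpow_neg_natCast_succ]
    ring
end

section
/- Let (X,d) be a geodesic metric space, let Φ: [0,∞) → (0,∞) be monotonically increasing with Φ(0) > 0 and Φ(t) → ∞ as t → ∞, and let ((U_i)_{i∈ℕ}, (x_i)_{i∈ℕ}) be an infinite Φ-chain in X (with indices ranging over all natural numbers). Then the intersection ⋂_{i∈ℕ} U_i is empty. -/
/-- **Infinite Φ-chains have empty intersection.** Let `X` be a geodesic metric space and
`Φ : [0,∞) → (0,∞)` monotonically increasing with `Φ(0) > 0` and `Φ(t) → ∞`. If the open
sets `U i` with track points `p i`, indexed over all of `ℕ`, form an infinite `Φ`-chain,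
then `⋂ i, U i = ∅`. -/
theorem infinite_phi_chain_empty_intersection {X : Type*} [MetricSpace X]
    (hgeo : GeodesicSpace X)
    (Φ : ℝ → ℝ) (hmono : MonotoneOn Φ (Set.Ici 0))
    (hpos : ∀ t : ℝ, 0 ≤ t → 0 < Φ t)
    (htop : Filter.Tendsto Φ Filter.atTop Filter.atTop)
    (U : ℕ → Set X) (p : ℕ → X)
    (hopen : ∀ i, IsOpen (U i))
    (hnest : ∀ i, U (i + 1) ⊆ U i)
    (hfront : ∀ i, p i ∈ frontier (U i))
    (hdist : ∀ i, Φ 0 ≤ dist (p i) (p (i + 1)) ∧ dist (p i) (p (i + 1)) ≤ 3 * Φ 0)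
    (hsep₁ : ∀ i, ∀ x ∈ frontier (U i),
      Φ (dist x (p i)) ≤ Metric.infDist x (frontier (U (i + 1))))
    (hsep₂ : ∀ i, ∀ x ∈ frontier (U (i + 1)),
      Φ (dist x (p (i + 1))) ≤ Metric.infDist x (frontier (U i))) :
    (⋂ i, U i) = ∅ := by
  by_contra h
  obtain ⟨z, hz⟩ := Set.nonempty_iff_ne_empty.2 h
  have hzU : ∀ i, z ∈ U i := fun i => Set.mem_iInter.1 hz i
  obtain ⟨γ, hγ0, hγL, hiso⟩ := hgeo z (p 0)
  set L : ℝ := dist z (p 0) with hLdef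
  have hL0 : (0 : ℝ) ≤ L := dist_nonneg
  -- U i ⊆ U 0
  have hU0 : ∀ i, U i ⊆ U 0 := by
    intro i
    induction i with
    | zero => exact le_refl _
    | succ n ih => exact (hnest n).trans ih
  have hp0 : ∀ i, p 0 ∉ U i := by
    intro i hmem
    exact ((hopen 0).frontier_eq ▸ hfront 0).2 (hU0 i hmem)
  -- exit times
  set S : ℕ → Set ℝ := fun i => {t | t ∈ Set.Icc (0 : ℝ) L ∧ γ t ∉ U i} with hS
  have hSne : ∀ i, (S i).Nonempty := fun i => ⟨L, ⟨hL0, le_refl L⟩, by rw [hγL]; exact hp0 i⟩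
  have hSbdd : ∀ i, BddBelow (S i) := fun i => ⟨0, fun t ht => ht.1.1⟩
  set t : ℕ → ℝ := fun i => sInf (S i) with ht
  have htmem : ∀ i, t i ∈ Set.Icc (0 : ℝ) L := fun i =>
    ⟨le_csInf (hSne i) fun s hs => hs.1.1,
      csInf_le (hSbdd i) ⟨⟨hL0, le_refl L⟩, by rw [hγL]; exact hp0 i⟩⟩
  have hbefore : ∀ i, ∀ s ∈ Set.Icc (0 : ℝ) L, s < t i → γ s ∈ U i := by
    intro i s hs hlt
    by_contra hno
    exact absurd (csInf_le (hSbdd i) ⟨hs, hno⟩) (not_le.2 hlt)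
  -- γ (t i) ∈ frontier (U i)
  have hfr : ∀ i, γ (t i) ∈ frontier (U i) := by
    intro i
    rw [(hopen i).frontier_eq]
    constructor
    · -- in closure
      rcases eq_or_lt_of_le (htmem i).1 with h0 | h0
      · exact subset_closure (by rw [← h0, hγ0]; exact hzU i)
      · rw [Metric.mem_closure_iff]
        intro ε hε
        set s := max 0 (t i - ε / 2) with hs
        have hsle : s ≤ t i := max_le (htmem i).1 (by linarith)
        have hsmem : s ∈ Set.Icc (0 : ℝ) L := ⟨le_max_left _ _, hsle.trans (htmem i).2⟩
        have hslt : s < t i := by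
          apply max_lt h0; linarith
        refine ⟨γ s, hbefore i s hsmem hslt, ?_⟩
        rw [hiso _ (htmem i) _ hsmem, abs_of_nonneg (by linarith : (0:ℝ) ≤ t i - s)]
        have : t i - s ≤ ε / 2 := by
          have := le_max_right 0 (t i - ε / 2)
          linarith
        linarith
    · -- not in U i : γ (t i) ∈ (U i)ᶜ which is closed; approximate from S i
      have hcl : γ (t i) ∈ closure (U i)ᶜ := by
        rw [Metric.mem_closure_iff]
        intro ε hε
        obtain ⟨s, hsS, hslt⟩ := (csInf_lt_iff (hSbdd i) (hSne i)).1
          (by linarith : sInf (S i) < t i + ε)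
        have hsge : t i ≤ s := csInf_le (hSbdd i) hsS
        refine ⟨γ s, hsS.2, ?_⟩
        rw [hiso _ (htmem i) _ hsS.1, abs_of_nonpos (by linarith)]
        linarith
      rwa [IsClosed.closure_eq (hopen i).isClosed_compl] at hcl
  -- the decrease step
  have hstep : ∀ i, t (i + 1) + Φ 0 ≤ t i := by
    intro i
    have hmonoS : t (i + 1) ≤ t i :=
      csInf_le_csInf (hSbdd (i + 1)) (hSne i)
        (fun s hs => ⟨hs.1, fun hmem => hs.2 (hnest i hmem)⟩)
    have h1 : Φ 0 ≤ Φ (dist (γ (t i)) (p i)) :=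
      hmono (Set.mem_Ici.2 le_rfl) (Set.mem_Ici.2 dist_nonneg) dist_nonneg
    have h2 := hsep₁ i _ (hfr i)
    have h3 : Metric.infDist (γ (t i)) (frontier (U (i + 1))) ≤
        dist (γ (t i)) (γ (t (i + 1))) :=
      Metric.infDist_le_dist_of_mem (hfr (i + 1))
    have h4 : dist (γ (t i)) (γ (t (i + 1))) = t i - t (i + 1) := by
      rw [hiso _ (htmem i) _ (htmem (i + 1)), abs_of_nonneg (by linarith)]
    linarith
  -- iterate
  have hiter : ∀ n : ℕ, (n : ℝ) * Φ 0 + t n ≤ t 0 := by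
    intro n
    induction n with
    | zero => simp
    | succ n ih =>
      have := hstep n
      push_cast
      nlinarith
  obtain ⟨n, hn⟩ := exists_nat_gt (L / Φ 0)
  have hΦ0 : 0 < Φ 0 := hpos 0 le_rfl
  have := hiter n
  have h1 : L < (n : ℝ) * Φ 0 := by
    rw [div_lt_iff₀ hΦ0] at hn
    linarith
  have := (htmem n).1
  have := (htmem 0).2
  linarith
end
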